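/- arXiv:2212.09809 — 5 statements merged into one kernel-verified Lean document; each statement's English description precedes it below -/
import Mathlib

section
/- Suppose f_n : ⨿_k D^m → ℝ^n is a sequence of C^1 maps converging to f in the compact-open C^1 topology (i.e., f_n → f and Df_n → Df uniformly on compact subsets of each disc). Fix 0 < s < 1. Then LR((f_n)_s) converges to LR(f_s). -/
open Metric Set ENNReal

noncomputable abbrev Euc (n : ℕ) := EuclideanSpace ℝ (Fin n)

/-- The safe distance of a `k`-tuple of points in `ℝ^n`. -/
noncomputable def safeDist (r : ℕ) {k n : ℕ} (x : Fin k → Euc n) : ℝ :=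
  (Real.sqrt r)⁻¹ *
    sInf {v : ℝ | ∃ s : Finset (Fin k), s.card = r ∧
      v = Real.sqrt (∑ j ∈ s, ‖x j - (r : ℝ)⁻¹ • ∑ i ∈ s, x i‖ ^ 2)}

/-- The radius `R(f)` of a map of a union of open unit discs. -/
noncomputable def rad {k m n : ℕ} (f : Fin k → Euc m → Euc n) : ℝ≥0∞ :=
  ⨆ (i : Fin k) (x : Euc m) (_ : x ∈ ball (0 : Euc m) 1), (‖f i x - f i 0‖₊ : ℝ≥0∞)

/-- `LR(f)`, the largest radius under rescalings. -/
noncomputable def lrad {k m n : ℕ} (f : Fin k → Euc m → Euc n) : ℝ≥0∞ :=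
  ⨆ (i : Fin k) (t : ℝ) (_ : t ∈ Set.Ioc (0 : ℝ) 1) (x : Euc m) (_ : x ∈ ball (0 : Euc m) 1),
    (‖f i (t • x) - f i 0‖₊ : ℝ≥0∞) / ENNReal.ofReal t

/-- The rescaled map `f_s`. -/
noncomputable def resc (s : ℝ) {k m n : ℕ} (f : Fin k → Euc m → Euc n) :
    Fin k → Euc m → Euc n := fun i x => f i (s • x)

/-- `f` is non-`r`-overlapping: no `r` distinct components have a common image point. -/
def NonROverlap (r : ℕ) {k m n : ℕ} (f : Fin k → Euc m → Euc n) : Prop :=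
  ¬ ∃ (s : Finset (Fin k)) (x : Fin k → Euc m) (z : Euc n), s.card = r ∧
      (∀ i ∈ s, x i ∈ ball (0 : Euc m) 1) ∧ ∀ i ∈ s, f i (x i) = z

lemma diff_bound' {m n : ℕ} (g h : Euc m → Euc n) (s' ε : ℝ) (hs'0 : 0 < s') (hs'1 : s' ≤ 1)
    (hg : DifferentiableOn ℝ g (ball 0 1)) (hh : DifferentiableOn ℝ h (ball 0 1))
    (hb : ∀ x ∈ ball (0 : Euc m) s',
      ‖fderivWithin ℝ g (ball 0 1) x - fderivWithin ℝ h (ball 0 1) x‖ ≤ ε) :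
    ∀ y ∈ ball (0 : Euc m) s', ‖(g y - h y) - (g 0 - h 0)‖ ≤ ε * ‖y‖ := by
  intro y hy
  have hss : ball (0 : Euc m) s' ⊆ ball 0 1 := ball_subset_ball hs'1
  have hsub : DifferentiableOn ℝ (fun z => g z - h z) (ball (0 : Euc m) s') :=
    (hg.mono hss).sub (hh.mono hss)
  have key : ∀ x ∈ ball (0 : Euc m) s',
      ‖fderivWithin ℝ (fun z => g z - h z) (ball 0 s') x‖ ≤ ε := by
    intro x hx
    have hx1 : x ∈ ball (0 : Euc m) 1 := hss hx
    have hga : DifferentiableAt ℝ g x := hg.differentiableAt (isOpen_ball.mem_nhds hx1)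
    have hha : DifferentiableAt ℝ h x := hh.differentiableAt (isOpen_ball.mem_nhds hx1)
    rw [fderivWithin_of_isOpen isOpen_ball hx, fderiv_fun_sub hga hha]
    have := hb x hx
    rwa [fderivWithin_of_isOpen isOpen_ball hx1, fderivWithin_of_isOpen isOpen_ball hx1] at this
  have := (convex_ball (0 : Euc m) s').norm_image_sub_le_of_norm_fderivWithin_le hsub key
    (mem_ball_self hs'0) hy
  simpa using this


lemma quot_bound' {n : ℕ} (a b : Euc n) (t c : ℝ) (ht : 0 < t) (hc : 0 ≤ c)
    (h : ‖a‖ ≤ ‖b‖ + c * t) :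
    (‖a‖₊ : ℝ≥0∞) / ENNReal.ofReal t ≤ (‖b‖₊ : ℝ≥0∞) / ENNReal.ofReal t + ENNReal.ofReal c := by
  have h1 : (‖a‖₊ : ℝ≥0∞) ≤ (‖b‖₊ : ℝ≥0∞) + ENNReal.ofReal (c * t) := by
    rw [← enorm_eq_nnnorm, ← ofReal_norm, ← enorm_eq_nnnorm, ← ofReal_norm,
      ← ENNReal.ofReal_add (norm_nonneg _) (mul_nonneg hc ht.le)]
    exact ENNReal.ofReal_le_ofReal h
  calc (‖a‖₊ : ℝ≥0∞) / ENNReal.ofReal t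
      ≤ ((‖b‖₊ : ℝ≥0∞) + ENNReal.ofReal (c * t)) / ENNReal.ofReal t :=
        ENNReal.div_le_div_right h1 _
    _ = (‖b‖₊ : ℝ≥0∞) / ENNReal.ofReal t + ENNReal.ofReal c := by
        rw [ENNReal.add_div]
        congr 1
        rw [← ENNReal.ofReal_div_of_pos ht, mul_div_cancel_right₀ _ ht.ne']


lemma hmem' {k m n : ℕ} (g : Fin k → Euc m → Euc n) (i : Fin k) (t : ℝ)
    (ht : t ∈ Set.Ioc (0 : ℝ) 1) (x : Euc m) (hx : x ∈ ball (0 : Euc m) 1) :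
    (‖g i (t • x) - g i 0‖₊ : ℝ≥0∞) / ENNReal.ofReal t ≤ lrad g := by
  rw [lrad]
  exact le_iSup_of_le i (le_iSup_of_le t (le_iSup_of_le ht (le_iSup_of_le x
    (le_iSup_of_le hx le_rfl))))


/-- If `fₙ → f` in the compact-open `C¹` topology on the union of open unit discs,
then for fixed `0 < s < 1` one has `LR((fₙ)_s) → LR(f_s)`. -/
theorem lrad_resc_tendsto (r k m n : ℕ)
    (F : ℕ → (Fin k → Euc m → Euc n)) (f : Fin k → Euc m → Euc n)
    (hF : ∀ N i, ContDiffOn ℝ 1 (F N i) (ball (0 : Euc m) 1))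
    (hf : ∀ i, ContDiffOn ℝ 1 (f i) (ball (0 : Euc m) 1))
    (hconv : ∀ (K : Set (Euc m)), IsCompact K → K ⊆ ball (0 : Euc m) 1 → ∀ i,
      TendstoUniformlyOn (fun N x => F N i x) (f i) Filter.atTop K ∧
      TendstoUniformlyOn (fun N x => fderivWithin ℝ (F N i) (ball (0 : Euc m) 1) x)
        (fun x => fderivWithin ℝ (f i) (ball (0 : Euc m) 1) x) Filter.atTop K)
    (s : ℝ) (hs0 : 0 < s) (hs1 : s < 1) :
    Filter.Tendsto (fun N => lrad (resc s (F N))) Filter.atTop (nhds (lrad (resc s f))) := by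
  set s' : ℝ := (1 + s) / 2 with hs'def
  have hs'0 : 0 < s' := by positivity
  have hs'1 : s' < 1 := by simp only [hs'def]; linarith
  have hss' : s < s' := by simp only [hs'def]; linarith
  set K : Set (Euc m) := closedBall 0 s' with hKdef
  have hK : IsCompact K := isCompact_closedBall _ _
  have hKb : K ⊆ ball (0 : Euc m) 1 := closedBall_subset_ball hs'1
  -- membership of the scaled points
  have hymem : ∀ (t : ℝ), t ∈ Set.Ioc (0:ℝ) 1 → ∀ x ∈ ball (0 : Euc m) 1,
      s • t • x ∈ ball (0 : Euc m) s' ∧ ‖s • t • x‖ ≤ s * t := by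
    intro t ht x hx
    rw [mem_ball_zero_iff] at hx
    have hnorm : ‖s • t • x‖ = s * (t * ‖x‖) := by
      rw [norm_smul, norm_smul, Real.norm_eq_abs, Real.norm_eq_abs,
        abs_of_pos hs0, abs_of_pos ht.1]
    obtain ⟨ht0, ht1⟩ := ht
    have h1 : t * ‖x‖ ≤ t := by nlinarith [norm_nonneg x]
    have h2 : s * (t * ‖x‖) ≤ s * t := mul_le_mul_of_nonneg_left h1 hs0.le
    constructor
    · rw [mem_ball_zero_iff, hnorm]
      nlinarith
    · rw [hnorm]
      exact h2
  -- the comparison lemma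
  have hcomp : ∀ (g h : Fin k → Euc m → Euc n) (δ : ℝ), 0 ≤ δ →
      (∀ i, ∀ y ∈ ball (0 : Euc m) s', ‖(g i y - h i y) - (g i 0 - h i 0)‖ ≤ δ * ‖y‖) →
      lrad (resc s g) ≤ lrad (resc s h) + ENNReal.ofReal (δ * s) := by
    intro g h δ hδ0 hgh
    rw [lrad]
    refine iSup_le fun i => iSup_le fun t => iSup_le fun ht => iSup_le fun x => iSup_le fun hx => ?_
    obtain ⟨hy1, hy2⟩ := hymem t ht x hx
    set y : Euc m := s • t • x with hy
    have hbd := hgh i y hy1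
    have hδy : δ * ‖y‖ ≤ (δ * s) * t := by
      calc δ * ‖y‖ ≤ δ * (s * t) := by
            exact mul_le_mul_of_nonneg_left hy2 hδ0
        _ = (δ * s) * t := by ring
    have htri : ‖g i y - g i 0‖ ≤ ‖h i y - h i 0‖ + (δ * s) * t := by
      have heq : g i y - g i 0 = (h i y - h i 0) + ((g i y - h i y) - (g i 0 - h i 0)) := by
        abel
      calc ‖g i y - g i 0‖ ≤ ‖h i y - h i 0‖ + ‖(g i y - h i y) - (g i 0 - h i 0)‖ := by
            rw [heq]; exact norm_add_le _ _
        _ ≤ ‖h i y - h i 0‖ + (δ * s) * t := by linarith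
    have hq := quot_bound' (g i y - g i 0) (h i y - h i 0) t (δ * s) ht.1
      (mul_nonneg hδ0 hs0.le) htri
    have hrw : resc s g i (t • x) - resc s g i 0 = g i y - g i 0 := by
      simp only [resc, smul_zero, hy]
    have hrw2 : resc s h i (t • x) - resc s h i 0 = h i y - h i 0 := by
      simp only [resc, smul_zero, hy]
    rw [hrw]
    refine hq.trans (add_le_add_left ?_ _)
    have := hmem' (resc s h) i t ht x hx
    rwa [hrw2] at this
  -- finiteness of lrad (resc s f)
  have hCex : ∀ i : Fin k, ∃ C, ∀ x ∈ K, ‖fderivWithin ℝ (f i) (ball 0 1) x‖ ≤ C :=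
    fun i => hK.exists_bound_of_continuousOn
      (((hf i).continuousOn_fderivWithin isOpen_ball.uniqueDiffOn le_rfl).mono hKb)
  choose C hC using hCex
  set Cm : ℝ := ∑ i, max (C i) 0 with hCm
  have hCm0 : 0 ≤ Cm := Finset.sum_nonneg fun i _ => le_max_right _ _
  have hCmi : ∀ i, C i ≤ Cm := fun i =>
    (le_max_left _ _).trans (Finset.single_le_sum (fun j _ => le_max_right (C j) 0)
      (Finset.mem_univ i))
  have hfb : ∀ i, ∀ y ∈ ball (0 : Euc m) s', ‖f i y - f i 0‖ ≤ Cm * ‖y‖ := by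
    intro i y hy
    have := diff_bound' (f i) (fun _ => 0) s' Cm hs'0 hs'1.le
      ((hf i).differentiableOn one_ne_zero) (differentiableOn_const 0) ?_ y hy
    · simpa using this
    · intro x hx
      have hx1 : x ∈ ball (0 : Euc m) 1 := ball_subset_ball hs'1.le hx
      have : fderivWithin ℝ (fun _ : Euc m => (0 : Euc n)) (ball 0 1) x = 0 :=
        fderivWithin_const_apply _
      rw [this, sub_zero]
      exact (hC i x (ball_subset_closedBall hx)).trans (hCmi i)
  have hfintop : lrad (resc s f) ≤ ENNReal.ofReal (Cm * s) := by
    have := hcomp f (fun _ _ => 0) Cm hCm0 (by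
      intro i y hy
      simpa using hfb i y hy)
    refine this.trans ?_
    have : lrad (resc s (fun (_ : Fin k) (_ : Euc m) => (0 : Euc n))) = 0 := by
      rw [lrad]
      simp [resc]
    rw [this, zero_add]
  have hne : lrad (resc s f) ≠ ⊤ := ne_top_of_le_ne_top ENNReal.ofReal_ne_top hfintop
  rw [ENNReal.tendsto_nhds hne]
  intro ε hε
  set e : ℝ≥0∞ := min ε 1 with hedef
  have he0 : 0 < e := lt_min hε zero_lt_one
  have heT : e ≠ ⊤ := ne_top_of_le_ne_top one_ne_top (min_le_right _ _)
  have heε : e ≤ ε := min_le_left _ _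
  set δ : ℝ := e.toReal / s with hδdef
  have hδ0 : 0 < δ := div_pos (ENNReal.toReal_pos he0.ne' heT) hs0
  have hofδ : ENNReal.ofReal (δ * s) ≤ ε := by
    rw [hδdef, div_mul_cancel₀ _ hs0.ne', ENNReal.ofReal_toReal heT]
    exact heε
  have hev : ∀ᶠ N in Filter.atTop, ∀ i : Fin k, ∀ x ∈ K,
      dist (fderivWithin ℝ (f i) (ball (0:Euc m) 1) x)
        (fderivWithin ℝ (F N i) (ball (0:Euc m) 1) x) < δ :=
    Filter.eventually_all.2 fun i =>
      (Metric.tendstoUniformlyOn_iff.1 (hconv K hK hKb i).2) δ hδ0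
  filter_upwards [hev] with N hN
  have hkeyFN : ∀ i, ∀ y ∈ ball (0 : Euc m) s',
      ‖(F N i y - f i y) - (F N i 0 - f i 0)‖ ≤ δ * ‖y‖ := by
    intro i
    refine diff_bound' (F N i) (f i) s' δ hs'0 hs'1.le
      ((hF N i).differentiableOn one_ne_zero) ((hf i).differentiableOn one_ne_zero) ?_
    intro x hx
    have := hN i x (ball_subset_closedBall hx)
    rw [dist_eq_norm] at this
    rw [← norm_neg]
    simpa [neg_sub] using this.le
  have hkeyfF : ∀ i, ∀ y ∈ ball (0 : Euc m) s',
      ‖(f i y - F N i y) - (f i 0 - F N i 0)‖ ≤ δ * ‖y‖ := by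
    intro i y hy
    have heq : f i y - F N i y - (f i 0 - F N i 0)
        = -((F N i y - f i y) - (F N i 0 - f i 0)) := by abel
    rw [heq, norm_neg]
    exact hkeyFN i y hy
  have h1 : lrad (resc s (F N)) ≤ lrad (resc s f) + ENNReal.ofReal (δ * s) :=
    hcomp (F N) f δ hδ0.le hkeyFN
  have h2 : lrad (resc s f) ≤ lrad (resc s (F N)) + ENNReal.ofReal (δ * s) :=
    hcomp f (F N) δ hδ0.le hkeyfF
  constructor
  · exact tsub_le_iff_right.2 (h2.trans (add_le_add_right hofδ _))
  · exact h1.trans (add_le_add_right hofδ _)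
end

section
/- The subspace of rConf(k, ℝ^n) × L(ℝ^m, ℝ^n)^k consisting of tuples ((x_1, ..., x_k), (A_1, ..., A_k)) with ||A_i|| ≤ sd(x_1, ..., x_k) for all i is a deformation retract of rConf(k, ℝ^n) × L(ℝ^m, ℝ^n)^k; in particular the inclusion is a homotopy equivalence. -/
open Metric Set ENNReal

/-- Membership in the `r`-configuration space: no `r` of the points coincide. -/
def InRConf (r : ℕ) {k n : ℕ} (x : Fin k → Euc n) : Prop :=
  ¬ ∃ (s : Finset (Fin k)) (z : Euc n), s.card = r ∧ ∀ i ∈ s, x i = z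

lemma safeDist_eq_inf' {r k n : ℕ}
    (hS : (Finset.univ.filter fun s : Finset (Fin k) => s.card = r).Nonempty)
    (x : Fin k → Euc n) :
    safeDist r x = (Real.sqrt r)⁻¹ *
      (Finset.univ.filter fun s : Finset (Fin k) => s.card = r).inf' hS
        (fun s => Real.sqrt (∑ j ∈ s, ‖x j - (r : ℝ)⁻¹ • ∑ i ∈ s, x i‖ ^ 2)) := by
  unfold safeDist
  congr 1
  rw [Finset.inf'_eq_csInf_image]
  congr 1
  ext v
  simp only [Set.mem_setOf_eq, Set.mem_image, Finset.coe_filter, Finset.mem_univ, true_and]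
  constructor
  · rintro ⟨s, hs, rfl⟩; exact ⟨s, hs, rfl⟩
  · rintro ⟨s, hs, rfl⟩; exact ⟨s, hs, rfl⟩

lemma filter_card_nonempty {r k : ℕ} (hrk : r ≤ k) :
    (Finset.univ.filter fun s : Finset (Fin k) => s.card = r).Nonempty := by
  obtain ⟨s0, -, hs0⟩ :=
    Finset.exists_subset_card_eq (s := (Finset.univ : Finset (Fin k))) (n := r) (by simpa using hrk)
  exact ⟨s0, by simp [hs0]⟩

lemma continuous_safeDist {r k n : ℕ} (hrk : r ≤ k) :
    Continuous (fun x : Fin k → Euc n => safeDist r x) := by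
  have hS := filter_card_nonempty (k := k) hrk
  have heq : (fun x : Fin k → Euc n => safeDist r x) = fun x => (Real.sqrt r)⁻¹ *
      (Finset.univ.filter fun s : Finset (Fin k) => s.card = r).inf' hS
        (fun s => Real.sqrt (∑ j ∈ s, ‖x j - (r : ℝ)⁻¹ • ∑ i ∈ s, x i‖ ^ 2)) :=
    funext fun x => safeDist_eq_inf' hS x
  rw [heq]
  apply continuous_const.mul
  apply Continuous.finset_inf'_apply hS
  intro s _
  apply Real.continuous_sqrt.comp
  apply continuous_finset_sum
  intro j _
  have h1 : Continuous fun x : Fin k → Euc n => x j - (r : ℝ)⁻¹ • ∑ i ∈ s, x i :=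
    (continuous_apply j).sub
      ((continuous_finset_sum s fun i _ => continuous_apply i).const_smul ((r : ℝ)⁻¹))
  exact h1.norm.pow 2

lemma safeDist_pos {r k n : ℕ} (hr : 1 ≤ r) (hrk : r ≤ k) {x : Fin k → Euc n}
    (hx : InRConf r x) : 0 < safeDist r x := by
  have hS := filter_card_nonempty (k := k) hrk
  rw [safeDist_eq_inf' hS]
  apply _root_.mul_pos
  · exact inv_pos.mpr (Real.sqrt_pos.mpr (by exact_mod_cast Nat.lt_of_lt_of_le Nat.zero_lt_one hr))
  · rw [Finset.lt_inf'_iff]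
    intro s hs
    simp only [Finset.mem_filter, Finset.mem_univ, true_and] at hs
    apply Real.sqrt_pos.mpr
    have hnn : ∀ j ∈ s, (0 : ℝ) ≤ ‖x j - (r : ℝ)⁻¹ • ∑ i ∈ s, x i‖ ^ 2 :=
      fun j _ => sq_nonneg _
    rcases lt_or_eq_of_le (Finset.sum_nonneg hnn) with h | h
    · exact h
    · exfalso
      apply hx
      refine ⟨s, (r : ℝ)⁻¹ • ∑ i ∈ s, x i, hs, fun j hj => ?_⟩
      have h0 := (Finset.sum_eq_zero_iff_of_nonneg hnn).mp h.symm j hj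
      have := pow_eq_zero_iff (two_ne_zero) |>.mp h0
      exact sub_eq_zero.mp (norm_eq_zero.mp this)

set_option maxHeartbeats 1000000 in
/-- The subspace of `rConf(k, ℝⁿ) × L(ℝᵐ, ℝⁿ)ᵏ` consisting of tuples with
`‖Aᵢ‖ ≤ sd(x)` for all `i` is a (strong) deformation retract of the whole space;
in particular the inclusion is a homotopy equivalence. -/
theorem small_tuples_deformation_retract (r k m n : ℕ) (hr : 2 ≤ r) (hk : r ≤ k) :
    ∃ H : ({p : (Fin k → Euc n) × (Fin k → (Euc m →L[ℝ] Euc n)) //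
            InRConf r p.1 ∧ ∀ i, Function.Injective (p.2 i)} → ℝ →
           {p : (Fin k → Euc n) × (Fin k → (Euc m →L[ℝ] Euc n)) //
            InRConf r p.1 ∧ ∀ i, Function.Injective (p.2 i)}),
      Continuous (fun q : _ × ℝ => H q.1 q.2) ∧
      (∀ x, H x 0 = x) ∧
      (∀ x, ∀ i, ‖(H x 1).val.2 i‖ ≤ safeDist r (H x 1).val.1) ∧
      (∀ x, (∀ i, ‖x.val.2 i‖ ≤ safeDist r x.val.1) →
        ∀ t ∈ Set.Icc (0 : ℝ) 1, H x t = x) := by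
  classical
  have hk0 : 0 < k := by omega
  haveI : Nonempty (Fin k) := ⟨⟨0, hk0⟩⟩
  have huniv : (Finset.univ : Finset (Fin k)).Nonempty := Finset.univ_nonempty
  set M : (Fin k → (Euc m →L[ℝ] Euc n)) → ℝ :=
    fun A => Finset.univ.sup' huniv fun i => ‖A i‖ with hM
  set c : (Fin k → Euc n) × (Fin k → (Euc m →L[ℝ] Euc n)) → ℝ :=
    fun p => safeDist r p.1 / max (M p.2) (safeDist r p.1) with hc
  set φ : (Fin k → Euc n) × (Fin k → (Euc m →L[ℝ] Euc n)) → ℝ → ℝ :=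
    fun p t => 1 - min 1 (max t 0) * (1 - c p) with hφ
  -- basic facts
  have hMnn : ∀ A, 0 ≤ M A := fun A => le_trans (norm_nonneg _)
    (Finset.le_sup' (fun i => ‖A i‖) (Finset.mem_univ (Classical.arbitrary _)))
  have hsd_pos : ∀ p : (Fin k → Euc n) × (Fin k → (Euc m →L[ℝ] Euc n)),
      InRConf r p.1 → 0 < safeDist r p.1 := fun p hp => safeDist_pos (by omega) hk hp
  have hden_pos : ∀ (p : (Fin k → Euc n) × (Fin k → (Euc m →L[ℝ] Euc n))), InRConf r p.1 → 0 < max (M p.2) (safeDist r p.1) :=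
    fun p hp => lt_max_of_lt_right (hsd_pos p hp)
  have hc_pos : ∀ (p : (Fin k → Euc n) × (Fin k → (Euc m →L[ℝ] Euc n))), InRConf r p.1 → 0 < c p :=
    fun p hp => div_pos (hsd_pos p hp) (hden_pos p hp)
  have hc_le : ∀ (p : (Fin k → Euc n) × (Fin k → (Euc m →L[ℝ] Euc n))), InRConf r p.1 → c p ≤ 1 :=
    fun p hp => (div_le_one (hden_pos p hp)).mpr (le_max_right _ _)
  have hφ_pos : ∀ (p : (Fin k → Euc n) × (Fin k → (Euc m →L[ℝ] Euc n))) (t : ℝ), InRConf r p.1 → 0 < φ p t := by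
    intro p t hp
    have h1 : 0 ≤ min 1 (max t 0) := le_min zero_le_one (le_max_right _ _)
    have h2 : min 1 (max t 0) ≤ 1 := min_le_left _ _
    have h3 := hc_pos p hp
    have h4 := hc_le p hp
    simp only [hφ]
    nlinarith
  refine ⟨fun (p : {p : (Fin k → Euc n) × (Fin k → (Euc m →L[ℝ] Euc n)) //
      InRConf r p.1 ∧ ∀ i, Function.Injective (p.2 i)}) t =>
    ⟨(p.val.1, fun i => φ p.val t • p.val.2 i), p.prop.1, fun i a b hab => ?_⟩,
    ?_, ?_, ?_, ?_⟩
  · -- injectivity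
    have hab' : φ p.val t • (p.val.2 i a) = φ p.val t • (p.val.2 i b) := hab
    exact p.prop.2 i (smul_right_injective (Euc n) (hφ_pos p.val t p.prop.1).ne' hab')
  · -- continuity
    apply Continuous.subtype_mk
    have hA : Continuous fun q : {p : (Fin k → Euc n) × (Fin k → (Euc m →L[ℝ] Euc n)) //
        InRConf r p.1 ∧ ∀ i, Function.Injective (p.2 i)} × ℝ => q.1.val.2 :=
      (continuous_subtype_val.comp continuous_fst).snd
    have hX : Continuous fun q : {p : (Fin k → Euc n) × (Fin k → (Euc m →L[ℝ] Euc n)) //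
        InRConf r p.1 ∧ ∀ i, Function.Injective (p.2 i)} × ℝ => q.1.val.1 :=
      (continuous_subtype_val.comp continuous_fst).fst
    have hMc : Continuous fun q : {p : (Fin k → Euc n) × (Fin k → (Euc m →L[ℝ] Euc n)) //
        InRConf r p.1 ∧ ∀ i, Function.Injective (p.2 i)} × ℝ => M q.1.val.2 := by
      apply (Continuous.finset_sup'_apply huniv
        (f := fun i (A : Fin k → (Euc m →L[ℝ] Euc n)) => ‖A i‖)
        (fun i _ => (continuous_apply i).norm)).comp hA
    have hsdc : Continuous fun q : {p : (Fin k → Euc n) × (Fin k → (Euc m →L[ℝ] Euc n)) //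
        InRConf r p.1 ∧ ∀ i, Function.Injective (p.2 i)} × ℝ => safeDist r q.1.val.1 :=
      (continuous_safeDist hk).comp hX
    have hcc : Continuous fun q : {p : (Fin k → Euc n) × (Fin k → (Euc m →L[ℝ] Euc n)) //
        InRConf r p.1 ∧ ∀ i, Function.Injective (p.2 i)} × ℝ => c q.1.val := by
      apply hsdc.div (hMc.max hsdc)
      exact fun q => (hden_pos q.1.val q.1.prop.1).ne'
    have hφc : Continuous fun q : {p : (Fin k → Euc n) × (Fin k → (Euc m →L[ℝ] Euc n)) //
        InRConf r p.1 ∧ ∀ i, Function.Injective (p.2 i)} × ℝ => φ q.1.val q.2 := by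
      apply continuous_const.sub
      exact ((continuous_const.min (continuous_snd.max continuous_const)).mul
        (continuous_const.sub hcc))
    refine hX.prodMk (continuous_pi fun i => hφc.smul ((continuous_apply i).comp hA))
  · -- H x 0 = x
    intro x
    apply Subtype.ext
    have h0 : φ x.val 0 = 1 := by simp [hφ]
    refine Prod.ext rfl (funext fun i => ?_)
    simp only [h0, one_smul]
  · -- t = 1 : norms small
    intro x i
    have hx := x.prop.1
    have h1 : φ x.val 1 = c x.val := by norm_num [hφ]
    show ‖φ x.val 1 • x.val.2 i‖ ≤ safeDist r x.val.1
    rw [h1]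
    have hAi : ‖x.val.2 i‖ ≤ max (M x.val.2) (safeDist r x.val.1) :=
      le_trans (Finset.le_sup' (fun j => ‖x.val.2 j‖) (Finset.mem_univ i)) (le_max_left _ _)
    calc ‖c x.val • x.val.2 i‖ ≤ ‖c x.val‖ * ‖x.val.2 i‖ :=
          ContinuousLinearMap.opNorm_smul_le _ _
      _ = c x.val * ‖x.val.2 i‖ := by
          rw [Real.norm_eq_abs, abs_of_pos (hc_pos x.val hx)]
      _ ≤ c x.val * max (M x.val.2) (safeDist r x.val.1) :=
          mul_le_mul_of_nonneg_left hAi (hc_pos x.val hx).le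
      _ = safeDist r x.val.1 := div_mul_cancel₀ _ (hden_pos x.val hx).ne'
  · -- already small : fixed
    intro x hsmall t _
    have hx := x.prop.1
    have hMle : M x.val.2 ≤ safeDist r x.val.1 := Finset.sup'_le _ _ fun i _ => hsmall i
    have hc1 : c x.val = 1 := by
      simp only [hc, max_eq_right hMle]
      exact div_self (hsd_pos x.val hx).ne'
    have hφ1 : φ x.val t = 1 := by simp [hφ, hc1]
    apply Subtype.ext
    refine Prod.ext rfl (funext fun i => ?_)
    simp only [hφ1, one_smul]
end

section
/- Let X be a topological space, A ⊆ X a subspace, and suppose for every compact K and map h : K → X there is a homotopy Φ : K × [0,1] → X with Φ(·, 0) = h, Φ(K × {1}) ⊆ A, and such that Φ(y, t) ∈ A for all t whenever h(y) ∈ A. Then the inclusion A ↪ X induces a bijection on path components and, for compatible basepoints in A, surjections and injections on all homotopy groups; i.e., A ↪ X is a weak homotopy equivalence. -/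
open Set Metric

namespace InclWeakEq

/-- clamp to `[0,1]` -/
noncomputable def qc (r : ℝ) : ℝ := max 0 (min 1 r)

lemma qc_nonneg (r : ℝ) : 0 ≤ qc r := le_max_left _ _
lemma qc_le_one (r : ℝ) : qc r ≤ 1 := max_le zero_le_one (min_le_left _ _)
lemma qc_mem (r : ℝ) : qc r ∈ Icc (0:ℝ) 1 := ⟨qc_nonneg r, qc_le_one r⟩
lemma continuous_qc : Continuous qc :=
  continuous_const.max (continuous_const.min continuous_id)
lemma qc_zero : qc 0 = 0 := by norm_num [qc]
lemma qc_one : qc 1 = 1 := by norm_num [qc]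
lemma qc_of_one_le {r : ℝ} (h : 1 ≤ r) : qc r = 1 := by
  simp [qc, min_eq_left h]
lemma qc_of_nonpos {r : ℝ} (h : r ≤ 0) : qc r = 0 := by
  simp [qc, max_eq_left, min_le_of_right_le h]
lemma qc_of_mem {r : ℝ} (h : r ∈ Icc (0:ℝ) 1) : qc r = r := by
  simp [qc, min_eq_right h.2, max_eq_right h.1]

variable {n : ℕ}

local notation "E" => EuclideanSpace ℝ (Fin (n+1))
local notation "Sph" => Metric.sphere (0 : EuclideanSpace ℝ (Fin (n+1))) 1

/-- cutoff: 1 on ball of radius 1/4 about `b`, 0 outside radius 1/2 -/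
noncomputable def lcut (b y : Sph) : ℝ := qc (2 - 4 * ‖(y : E) - (b : E)‖)

/-- radial coordinate: 0 at `b`, 1 outside ball of radius 1/4 -/
noncomputable def mufun (b y : Sph) : ℝ := min 1 (4 * ‖(y : E) - (b : E)‖)

lemma mufun_mem (b y : Sph) : mufun b y ∈ Icc (0:ℝ) 1 :=
  ⟨le_min zero_le_one (by positivity), min_le_left _ _⟩

lemma mufun_self (b : Sph) : mufun b b = 0 := by simp [mufun]

lemma continuous_mufun (b : Sph) : Continuous (mufun b) :=
  continuous_const.min (continuous_const.mul
    ((continuous_subtype_val.sub continuous_const).norm))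

noncomputable def wmap (b : Sph) (t : ℝ) (y : Sph) : E :=
  (1 - qc t * lcut b y) • (y : E) + (qc t * lcut b y) • (b : E)

lemma wmap_ne_zero (b : Sph) (t : ℝ) (y : Sph) : wmap b t y ≠ 0 := by
  intro hw
  set s := qc t * lcut b y with hs
  have hy : ‖(y : E)‖ = 1 := mem_sphere_zero_iff_norm.mp y.2
  have hb : ‖(b : E)‖ = 1 := mem_sphere_zero_iff_norm.mp b.2
  have hs0 : 0 ≤ s := mul_nonneg (qc_nonneg t) (qc_nonneg _)
  have hs1 : s ≤ 1 := mul_le_one₀ (qc_le_one t) (qc_nonneg _) (qc_le_one _)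
  have h1 : (1 - s) • (y : E) = -(s • (b : E)) := by
    rw [eq_neg_iff_add_eq_zero]; exact hw
  have h2 : 1 - s = s := by
    have h3 := congrArg norm h1
    rw [norm_smul, norm_neg, norm_smul, hy, hb,
      Real.norm_eq_abs, Real.norm_eq_abs, abs_of_nonneg hs0,
      abs_of_nonneg (by linarith : (0:ℝ) ≤ 1 - s)] at h3
    linarith
  have hs2 : s = 1/2 := by linarith
  have h4 : (y : E) = -(b : E) := by
    have h5 : (1/2 : ℝ) • ((y : E) + (b : E)) = 0 := by
      rw [smul_add]
      calc (1/2 : ℝ) • (y:E) + (1/2 : ℝ) • (b:E)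
          = (1 - s) • (y : E) + s • (b : E) := by rw [hs2]; norm_num
        _ = 0 := hw
    have h6 : (y : E) + (b : E) = 0 := by
      have := smul_eq_zero.mp h5
      rcases this with h | h
      · norm_num at h
      · exact h
    linear_combination (norm := module) h6
  have h7 : ‖(y : E) - (b : E)‖ = 2 := by
    have : (y : E) - (b : E) = (-2 : ℝ) • (b : E) := by
      rw [h4]; module
    rw [this, norm_smul, hb, Real.norm_eq_abs]
    norm_num
  have h8 : lcut b y = 0 := by
    rw [lcut, h7]; exact qc_of_nonpos (by norm_num)
  rw [hs2, h8, mul_zero] at hs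
  norm_num at hs

noncomputable def Pmap (b : Sph) (t : ℝ) (y : Sph) : Sph :=
  ⟨‖wmap b t y‖⁻¹ • wmap b t y, by
    rw [mem_sphere_zero_iff_norm, norm_smul, norm_inv, norm_norm,
      inv_mul_cancel₀ (norm_ne_zero_iff.mpr (wmap_ne_zero b t y))]⟩

lemma continuous_wmap' {Z : Type} [TopologicalSpace Z] (b : Sph) {f : Z → ℝ} {g : Z → Sph}
    (hf : Continuous f) (hg : Continuous g) :
    Continuous (fun z => wmap b (f z) (g z)) := by
  have hgv : Continuous (fun z => ((g z : E))) := continuous_subtype_val.comp hg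
  have hn : Continuous (fun z => ‖((g z : E)) - (b : E)‖) :=
    (hgv.sub continuous_const).norm
  have hl : Continuous (fun z => qc (f z) * lcut b (g z)) :=
    (continuous_qc.comp hf).mul
      (continuous_qc.comp (continuous_const.sub (continuous_const.mul hn)))
  exact ((continuous_const.sub hl).smul hgv).add (hl.smul continuous_const)

lemma continuous_Pmap' {Z : Type} [TopologicalSpace Z] (b : Sph) {f : Z → ℝ} {g : Z → Sph}
    (hf : Continuous f) (hg : Continuous g) :
    Continuous (fun z => Pmap b (f z) (g z)) := by
  apply Continuous.subtype_mk
  exact (((continuous_wmap' b hf hg).norm).inv₀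
    (fun z => norm_ne_zero_iff.mpr (wmap_ne_zero b (f z) (g z)))).smul (continuous_wmap' b hf hg)

lemma Pmap_zero (b y : Sph) : Pmap b 0 y = y := by
  have hy : ‖(y : E)‖ = 1 := mem_sphere_zero_iff_norm.mp y.2
  apply Subtype.ext
  show ‖wmap b 0 y‖⁻¹ • wmap b 0 y = (y : E)
  have hw : wmap b 0 y = (y : E) := by
    simp [wmap, qc_zero]
  rw [hw, hy]; norm_num

lemma Pmap_basept (b : Sph) (t : ℝ) : Pmap b t b = b := by
  have hb : ‖(b : E)‖ = 1 := mem_sphere_zero_iff_norm.mp b.2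
  apply Subtype.ext
  show ‖wmap b t b‖⁻¹ • wmap b t b = (b : E)
  have hw : wmap b t b = (b : E) := by
    rw [wmap]
    have : lcut b b = 1 := by
      simp only [lcut, sub_self, norm_zero, mul_zero, sub_zero]
      exact qc_of_one_le (by norm_num)
    rw [this, mul_one]; module
  rw [hw, hb]; norm_num

lemma Pmap_of_near (b y : Sph) (h : mufun b y < 1) : Pmap b 1 y = b := by
  have hb : ‖(b : E)‖ = 1 := mem_sphere_zero_iff_norm.mp b.2
  have hd : 4 * ‖(y : E) - (b : E)‖ < 1 := by
    by_contra hc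
    push_neg at hc
    rw [mufun, min_eq_left hc] at h
    norm_num at h
  have hl : lcut b y = 1 := qc_of_one_le (by linarith)
  apply Subtype.ext
  show ‖wmap b 1 y‖⁻¹ • wmap b 1 y = (b : E)
  have hw : wmap b 1 y = (b : E) := by
    rw [wmap, hl, qc_one]; module
  rw [hw, hb]; norm_num


theorem part3 (X : Type) [TopologicalSpace X] (A : Set X) {d : ℕ}
    (b : Metric.sphere (0 : EuclideanSpace ℝ (Fin (d+1))) 1) (a₀ : A)
    (h : C(Metric.sphere (0 : EuclideanSpace ℝ (Fin (d+1))) 1, X)) (hb : h b = (a₀ : X))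
    (Φ : Metric.sphere (0 : EuclideanSpace ℝ (Fin (d+1))) 1 → ℝ → X)
    (hc : Continuous (fun p : Metric.sphere (0 : EuclideanSpace ℝ (Fin (d+1))) 1 × ℝ => Φ p.1 p.2))
    (h0 : ∀ y, Φ y 0 = h y) (h1 : ∀ y, Φ y 1 ∈ A)
    (hA : ∀ y, h y ∈ A → ∀ t ∈ Icc (0 : ℝ) 1, Φ y t ∈ A) :
    ∃ g : C(Metric.sphere (0 : EuclideanSpace ℝ (Fin (d+1))) 1, A), g b = a₀ ∧
        Nonempty (h.HomotopyRel
          ((⟨Subtype.val, continuous_subtype_val⟩ : C(A, X)).comp g) {b}) := by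
  have hΦ' : ∀ {Z : Type} [TopologicalSpace Z] {u : Z → Metric.sphere (0 : EuclideanSpace ℝ (Fin (d+1))) 1} {v : Z → ℝ},
      Continuous u → Continuous v → Continuous fun z => Φ (u z) (v z) := by
    intro Z _ u v hu hv
    exact hc.comp (hu.prodMk hv)
  have hbA : h b ∈ A := hb ▸ a₀.2
  have hΦbA : ∀ t ∈ Icc (0:ℝ) 1, Φ b t ∈ A := hA b hbA
  have gmem : ∀ y, Φ (Pmap b 1 y) (mufun b y) ∈ A := by
    intro y
    rcases lt_or_ge (mufun b y) 1 with hy | hy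
    · rw [Pmap_of_near b y hy]
      exact hΦbA _ (mufun_mem b y)
    · have : mufun b y = 1 := le_antisymm (mufun_mem b y).2 hy
      rw [this]; exact h1 _
  have hpm : Continuous (fun y : Metric.sphere (0 : EuclideanSpace ℝ (Fin (d+1))) 1 => Pmap b 1 y) :=
    continuous_Pmap' b continuous_const continuous_id
  have gcont : Continuous (fun y => Φ (Pmap b 1 y) (mufun b y)) :=
    hΦ' hpm (continuous_mufun b)
  refine ⟨⟨fun y => ⟨Φ (Pmap b 1 y) (mufun b y), gmem y⟩, gcont.subtype_mk _⟩, ?_, ?_⟩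
  · apply Subtype.ext
    show Φ (Pmap b 1 b) (mufun b b) = (a₀ : X)
    rw [Pmap_basept, mufun_self, h0, hb]
  · set pm : C(Metric.sphere (0 : EuclideanSpace ℝ (Fin (d+1))) 1,
        Metric.sphere (0 : EuclideanSpace ℝ (Fin (d+1))) 1) := ⟨fun y => Pmap b 1 y, hpm⟩ with hpmdef
    have c0 : ((0 : unitInterval) : ℝ) = 0 := rfl
    have c1 : ((1 : unitInterval) : ℝ) = 1 := rfl
    have F1 : h.HomotopyRel (h.comp pm) {b} :=
      { toFun := fun p => h (Pmap b (p.1 : ℝ) p.2)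
        continuous_toFun := h.continuous.comp (continuous_Pmap' b
          (continuous_subtype_val.comp continuous_fst) continuous_snd)
        map_zero_left := fun y => by
          show h (Pmap b ((0 : unitInterval) : ℝ) y) = h y
          rw [c0, Pmap_zero]
        map_one_left := fun y => by
          show h (Pmap b ((1 : unitInterval) : ℝ) y) = h (pm y)
          rfl
        prop' := fun t x hx => by
          rw [Set.mem_singleton_iff] at hx
          simp only [hx]
          show h (Pmap b _ b) = h b
          rw [Pmap_basept] }
    have F2 : (h.comp pm).HomotopyRel
        ((⟨Subtype.val, continuous_subtype_val⟩ : C(A, X)).comp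
          (⟨fun y => ⟨Φ (Pmap b 1 y) (mufun b y), gmem y⟩, gcont.subtype_mk _⟩ :
            C(Metric.sphere (0 : EuclideanSpace ℝ (Fin (d+1))) 1, A))) {b} :=
      { toFun := fun p => Φ (Pmap b 1 p.2) ((p.1 : ℝ) * mufun b p.2)
        continuous_toFun := hΦ' (continuous_Pmap' b continuous_const continuous_snd)
          ((continuous_subtype_val.comp continuous_fst).mul
            ((continuous_mufun b).comp continuous_snd))
        map_zero_left := fun y => by
          show Φ (Pmap b 1 y) (((0 : unitInterval) : ℝ) * mufun b y) = h (pm y)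
          rw [c0, zero_mul, h0]
          rfl
        map_one_left := fun y => by
          show Φ (Pmap b 1 y) (((1 : unitInterval) : ℝ) * mufun b y) = _
          rw [c1, one_mul]
          rfl
        prop' := fun t x hx => by
          rw [Set.mem_singleton_iff] at hx
          simp only [hx]
          show Φ (Pmap b 1 b) ((t : ℝ) * mufun b b) = h (pm b)
          rw [mufun_self, mul_zero, h0]
          rfl }
    exact ⟨F1.trans F2⟩


theorem part4 (X : Type) [TopologicalSpace X] (A : Set X) {d : ℕ}
    (b : Metric.sphere (0 : EuclideanSpace ℝ (Fin (d+1))) 1) (a₀ : A)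
    (g : C(Metric.sphere (0 : EuclideanSpace ℝ (Fin (d+1))) 1, A)) (hgb : g b = a₀)
    (F : (((⟨Subtype.val, continuous_subtype_val⟩ : C(A, X)).comp g)).HomotopyRel
          (ContinuousMap.const _ (a₀ : X)) {b})
    (Φ : unitInterval × Metric.sphere (0 : EuclideanSpace ℝ (Fin (d+1))) 1 → ℝ → X)
    (hc : Continuous (fun p : (unitInterval × Metric.sphere (0 : EuclideanSpace ℝ (Fin (d+1))) 1) × ℝ => Φ p.1 p.2))
    (h0 : ∀ y, Φ y 0 = F y) (h1 : ∀ y, Φ y 1 ∈ A)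
    (hA : ∀ y, F y ∈ A → ∀ t ∈ Icc (0 : ℝ) 1, Φ y t ∈ A) :
    Nonempty (g.HomotopyRel (ContinuousMap.const _ a₀) {b}) := by
  have c0 : ((0 : unitInterval) : ℝ) = 0 := rfl
  have c1 : ((1 : unitInterval) : ℝ) = 1 := rfl
  set π : ℝ → unitInterval := Set.projIcc (0:ℝ) 1 zero_le_one with hπ
  have F0 : ∀ y, F (0, y) = (g y : X) := fun y => F.toHomotopy.apply_zero y
  have F1' : ∀ y, F (1, y) = (a₀ : X) := fun y => F.toHomotopy.apply_one y
  have Fb : ∀ t, F (t, b) = (a₀ : X) := fun t => by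
    rw [F.eq_fst t (Set.mem_singleton b)]
    show (g b : X) = (a₀ : X)
    rw [hgb]
  set Hfun : ℝ → Metric.sphere (0 : EuclideanSpace ℝ (Fin (d+1))) 1 → X :=
    fun τ y => Φ (π (τ-1), y) (qc (min τ (3-τ))) with hHfun
  have π0 : ∀ τ : ℝ, τ ≤ 1 → π (τ-1) = 0 := by
    intro τ hτ
    rw [hπ, Set.projIcc_of_le_left _ (by linarith : τ-1 ≤ (0:ℝ))]
    rfl
  have π1 : ∀ τ : ℝ, 2 ≤ τ → π (τ-1) = 1 := by
    intro τ hτ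
    rw [hπ, Set.projIcc_of_right_le _ (by linarith : (1:ℝ) ≤ τ-1)]
    rfl
  have memH : ∀ (τ : ℝ) y, Hfun τ y ∈ A := by
    intro τ y
    show Φ (π (τ-1), y) (qc (min τ (3-τ))) ∈ A
    rcases le_or_gt 1 (min τ (3-τ)) with hm | hm
    · rw [qc_of_one_le hm]
      exact h1 _
    · rcases min_lt_iff.mp hm with hτ | hτ
      · rw [π0 τ hτ.le]
        exact hA _ (by rw [F0]; exact (g y).2) _ (qc_mem _)
      · rw [π1 τ (by linarith)]
        exact hA _ (by rw [F1']; exact a₀.2) _ (qc_mem _)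
  have H0 : ∀ z, Hfun 0 z = (g z : X) := by
    intro z
    show Φ (π (0-1), z) (qc (min 0 (3-0))) = _
    rw [π0 0 (by norm_num)]
    rw [(show min (0:ℝ) (3-0) = 0 by norm_num), qc_zero, h0, F0]
  have H3 : ∀ z, Hfun 3 z = (a₀ : X) := by
    intro z
    show Φ (π (3-1), z) (qc (min 3 (3-3))) = _
    rw [π1 3 (by norm_num)]
    rw [(show min (3:ℝ) (3-3) = 0 by norm_num), qc_zero, h0, F1']
  have contH : ∀ {Z : Type} [TopologicalSpace Z] {u : Z → ℝ}
      {v : Z → Metric.sphere (0 : EuclideanSpace ℝ (Fin (d+1))) 1},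
      Continuous u → Continuous v → Continuous fun z => Hfun (u z) (v z) := by
    intro Z _ u v hu hv
    have hπc : Continuous π := continuous_projIcc
    exact hc.comp (((hπc.comp (hu.sub continuous_const)).prodMk hv).prodMk
      (continuous_qc.comp (hu.min (continuous_const.sub hu))))
  set Nfun : ℝ → ℝ → X :=
    fun u v => Φ (π (3*v-1), b) ((1 - qc u) * qc (min (3*v) (3-3*v))) with hNfun
  have memN : ∀ u v, Nfun u v ∈ A := by
    intro u v
    show Φ (π (3*v-1), b) ((1 - qc u) * qc (min (3*v) (3-3*v))) ∈ A
    refine hA _ (by rw [Fb]; exact a₀.2) _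
      ⟨mul_nonneg (by linarith [qc_le_one u]) (qc_nonneg _),
       mul_le_one₀ (by linarith [qc_nonneg u]) (qc_nonneg _) (qc_le_one _)⟩
  have contN : ∀ {Z : Type} [TopologicalSpace Z] {u : Z → ℝ} {v : Z → ℝ},
      Continuous u → Continuous v → Continuous fun z => Nfun (u z) (v z) := by
    intro Z _ u v hu hv
    have hπc : Continuous π := continuous_projIcc
    exact hc.comp (((hπc.comp ((continuous_const.mul hv).sub
        continuous_const)).prodMk continuous_const).prodMk
      ((continuous_const.sub (continuous_qc.comp hu)).mul
        (continuous_qc.comp ((continuous_const.mul hv).min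
          (continuous_const.sub (continuous_const.mul hv))))))
  have hpm : Continuous (fun y : Metric.sphere (0 : EuclideanSpace ℝ (Fin (d+1))) 1 => Pmap b 1 y) :=
    continuous_Pmap' b continuous_const continuous_id
  set pm : C(Metric.sphere (0 : EuclideanSpace ℝ (Fin (d+1))) 1,
      Metric.sphere (0 : EuclideanSpace ℝ (Fin (d+1))) 1) := ⟨fun y => Pmap b 1 y, hpm⟩ with hpmdef
  set g₁ : C(Metric.sphere (0 : EuclideanSpace ℝ (Fin (d+1))) 1, A) :=
    ⟨fun y => ⟨Hfun (3 * mufun b y) (Pmap b 1 y), memH _ _⟩,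
      Continuous.subtype_mk (contH (continuous_const.mul (continuous_mufun b)) hpm) _⟩ with hg₁
  have R1 : g.HomotopyRel (g.comp pm) {b} :=
    { toFun := fun p => g (Pmap b (p.1 : ℝ) p.2)
      continuous_toFun := g.continuous.comp (continuous_Pmap' b
        (continuous_subtype_val.comp continuous_fst) continuous_snd)
      map_zero_left := fun y => by
        show g (Pmap b ((0 : unitInterval) : ℝ) y) = g y
        rw [c0, Pmap_zero]
      map_one_left := fun y => rfl
      prop' := fun t x hx => by
        rw [Set.mem_singleton_iff] at hx
        simp only [hx]
        show g (Pmap b _ b) = g b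
        rw [Pmap_basept] }
  have R2 : (g.comp pm).HomotopyRel g₁ {b} :=
    { toFun := fun p => ⟨Hfun (3 * (p.1 : ℝ) * mufun b p.2) (Pmap b 1 p.2), memH _ _⟩
      continuous_toFun := Continuous.subtype_mk (contH
        ((continuous_const.mul (continuous_subtype_val.comp continuous_fst)).mul
          ((continuous_mufun b).comp continuous_snd))
        (continuous_Pmap' b continuous_const continuous_snd)) _
      map_zero_left := fun y => by
        apply Subtype.ext
        show Hfun (3 * ((0 : unitInterval) : ℝ) * mufun b y) (Pmap b 1 y) = (g (pm y) : X)
        rw [c0, mul_zero, zero_mul, H0]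
        rfl
      map_one_left := fun y => by
        apply Subtype.ext
        show Hfun (3 * ((1 : unitInterval) : ℝ) * mufun b y) (Pmap b 1 y) = (g₁ y : X)
        rw [c1, mul_one]
        rfl
      prop' := fun t x hx => by
        rw [Set.mem_singleton_iff] at hx
        simp only [hx]
        apply Subtype.ext
        show Hfun (3 * (t : ℝ) * mufun b b) (Pmap b 1 b) = (g (pm b) : X)
        rw [mufun_self, mul_zero, Pmap_basept, H0]
        show (g b : X) = (g (pm b) : X)
        rw [hpmdef]
        show (g b : X) = (g (Pmap b 1 b) : X)
        rw [Pmap_basept] }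
  have R3 : g₁.HomotopyRel (ContinuousMap.const _ a₀) {b} :=
    { toFun := fun p => ⟨Nfun (p.1 : ℝ) (mufun b p.2), memN _ _⟩
      continuous_toFun := Continuous.subtype_mk
        (contN (continuous_subtype_val.comp continuous_fst)
          ((continuous_mufun b).comp continuous_snd)) _
      map_zero_left := fun y => by
        apply Subtype.ext
        show Nfun ((0 : unitInterval) : ℝ) (mufun b y) = (g₁ y : X)
        rcases lt_or_ge (mufun b y) 1 with hy | hy
        · show Φ (π (3 * mufun b y - 1), b) ((1 - qc ((0 : unitInterval) : ℝ)) *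
            qc (min (3 * mufun b y) (3 - 3 * mufun b y))) = _
          rw [c0, qc_zero, sub_zero, one_mul]
          show Hfun (3 * mufun b y) b = (g₁ y : X)
          rw [hg₁]
          show Hfun (3 * mufun b y) b = Hfun (3 * mufun b y) (Pmap b 1 y)
          rw [Pmap_of_near b y hy]
        · have hμ : mufun b y = 1 := le_antisymm (mufun_mem b y).2 hy
          have e1 : Nfun ((0 : unitInterval) : ℝ) (mufun b y) = (a₀ : X) := by
            show Φ (π (3 * mufun b y - 1), b) _ = _
            rw [hμ, π1 (3*1) (by norm_num)]
            rw [(show min (3*(1:ℝ)) (3-3*1) = 0 by norm_num), qc_zero, mul_zero, h0, F1']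
          have e2 : (g₁ y : X) = (a₀ : X) := by
            show Hfun (3 * mufun b y) (Pmap b 1 y) = _
            rw [hμ, (show (3:ℝ)*1 = 3 by norm_num), H3]
          rw [e1, e2]
      map_one_left := fun y => by
        apply Subtype.ext
        show Nfun ((1 : unitInterval) : ℝ) (mufun b y) = (a₀ : X)
        show Φ (π (3 * mufun b y - 1), b) ((1 - qc ((1 : unitInterval) : ℝ)) *
          qc (min (3 * mufun b y) (3 - 3 * mufun b y))) = _
        rw [c1, qc_one, sub_self, zero_mul, h0, Fb]
      prop' := fun t x hx => by
        rw [Set.mem_singleton_iff] at hx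
        simp only [hx]
        apply Subtype.ext
        show Nfun (t : ℝ) (mufun b b) = (g₁ b : X)
        have e1 : Nfun (t : ℝ) (mufun b b) = (g b : X) := by
          show Φ (π (3 * mufun b b - 1), b) ((1 - qc (t : ℝ)) *
            qc (min (3 * mufun b b) (3 - 3 * mufun b b))) = _
          rw [mufun_self]
          rw [(show (3:ℝ)*0-1 = 0-1 by ring), π0 0 (by norm_num),
            (show min ((3:ℝ)*0) (3-3*0) = 0 by norm_num), qc_zero, mul_zero, h0, F0]
        have e2 : (g₁ b : X) = (g b : X) := by
          show Hfun (3 * mufun b b) (Pmap b 1 b) = _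
          rw [mufun_self, mul_zero, Pmap_basept, H0]
        rw [e1, e2] }
  exact ⟨(R1.trans R2).trans R3⟩

end InclWeakEq


/-- If every compact family in `X` can be deformed into the subspace `A`, keeping
the part that is already in `A` inside `A` throughout, then the inclusion
`A ↪ X` is a weak homotopy equivalence: it is a bijection on path components and,
for every basepoint in `A` and every dimension, it is surjective and injective on
homotopy groups (formulated via pointed maps from spheres). -/
theorem inclusion_weak_equivalence_of_compact_deformation
    (X : Type) [TopologicalSpace X] (A : Set X)
    (hdef : ∀ (K : Type) [TopologicalSpace K] [CompactSpace K] (h : K → X),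
      Continuous h → ∃ Φ : K → ℝ → X,
        Continuous (fun p : K × ℝ => Φ p.1 p.2) ∧
        (∀ y, Φ y 0 = h y) ∧
        (∀ y, Φ y 1 ∈ A) ∧
        (∀ y, h y ∈ A → ∀ t ∈ Icc (0 : ℝ) 1, Φ y t ∈ A)) :
    -- surjective on path components
    (∀ x : X, ∃ a : A, Joined x (a : X)) ∧
    -- injective on path components
    (∀ a₁ a₂ : A, Joined (a₁ : X) (a₂ : X) → Joined a₁ a₂) ∧
    -- surjective on homotopy groups: every pointed map of a sphere into `X` is
    -- pointed-homotopic to one landing in `A`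
    (∀ (d : ℕ) (b : sphere (0 : EuclideanSpace ℝ (Fin (d + 1))) 1) (a₀ : A)
       (h : C(sphere (0 : EuclideanSpace ℝ (Fin (d + 1))) 1, X)), h b = (a₀ : X) →
      ∃ g : C(sphere (0 : EuclideanSpace ℝ (Fin (d + 1))) 1, A), g b = a₀ ∧
        Nonempty (h.HomotopyRel
          ((⟨Subtype.val, continuous_subtype_val⟩ : C(A, X)).comp g) {b})) ∧
    -- injective on homotopy groups: a pointed map of a sphere into `A` that is
    -- pointed null-homotopic in `X` is pointed null-homotopic in `A`
    (∀ (d : ℕ) (b : sphere (0 : EuclideanSpace ℝ (Fin (d + 1))) 1) (a₀ : A)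
       (g : C(sphere (0 : EuclideanSpace ℝ (Fin (d + 1))) 1, A)), g b = a₀ →
      Nonempty ((((⟨Subtype.val, continuous_subtype_val⟩ : C(A, X)).comp g)).HomotopyRel
          (ContinuousMap.const _ (a₀ : X)) {b}) →
      Nonempty (g.HomotopyRel (ContinuousMap.const _ a₀) {b})) := by
  refine ⟨?_, ?_, ?_, ?_⟩
  · -- surjective on path components
    intro x
    obtain ⟨Φ, hc, h0, h1, _⟩ := hdef Unit (fun _ => x) continuous_const
    refine ⟨⟨Φ () 1, h1 ()⟩, ⟨⟨⟨fun t => Φ () t, ?_⟩, ?_, ?_⟩⟩⟩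
    · exact hc.comp (continuous_const.prodMk continuous_subtype_val)
    · simpa using h0 ()
    · simp
  · -- injective on path components
    rintro a₁ a₂ ⟨p⟩
    obtain ⟨Φ, hc, h0, h1, hA⟩ := hdef unitInterval (fun t => p t) p.continuous
    have m0 : ∀ t ∈ Icc (0:ℝ) 1, Φ 0 t ∈ A := by
      intro t ht
      exact hA 0 (by simp only [p.source]; exact a₁.2) t ht
    have m1 : ∀ t ∈ Icc (0:ℝ) 1, Φ 1 t ∈ A := by
      intro t ht
      exact hA 1 (by simp only [p.target]; exact a₂.2) t ht
    have c1 : Path a₁ (⟨Φ 0 1, m0 1 (by norm_num)⟩ : A) := by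
      refine ⟨⟨fun t => ⟨Φ 0 t, m0 t t.2⟩, ?_⟩, ?_, rfl⟩
      · exact Continuous.subtype_mk
          (hc.comp (continuous_const.prodMk continuous_subtype_val)) _
      · apply Subtype.ext
        simpa using (h0 0).trans p.source
    have c2 : Path (⟨Φ 0 1, m0 1 (by norm_num)⟩ : A) (⟨Φ 1 1, m1 1 (by norm_num)⟩ : A) := by
      refine ⟨⟨fun t => ⟨Φ t 1, h1 t⟩, ?_⟩, rfl, rfl⟩
      exact Continuous.subtype_mk
        (hc.comp (continuous_id.prodMk continuous_const)) _
    have c3 : Path (⟨Φ 1 1, m1 1 (by norm_num)⟩ : A) a₂ := by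
      refine Path.symm ⟨⟨fun t => ⟨Φ 1 t, m1 t t.2⟩, ?_⟩, ?_, rfl⟩
      · exact Continuous.subtype_mk
          (hc.comp (continuous_const.prodMk continuous_subtype_val)) _
      · apply Subtype.ext
        simpa using (h0 1).trans p.target
    exact ⟨(c1.trans c2).trans c3⟩
  · -- surjective on homotopy groups
    intro d b a₀ h hb
    obtain ⟨Φ, hc, h0, h1, hA⟩ :=
      hdef (Metric.sphere (0 : EuclideanSpace ℝ (Fin (d+1))) 1) h h.continuous
    exact InclWeakEq.part3 X A b a₀ h hb Φ hc h0 h1 hA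
  · -- injective on homotopy groups
    intro d b a₀ g hgb hF
    obtain ⟨F⟩ := hF
    obtain ⟨Φ, hc, h0, h1, hA⟩ :=
      hdef (unitInterval × Metric.sphere (0 : EuclideanSpace ℝ (Fin (d+1))) 1)
        (fun p => F p) F.toHomotopy.toContinuousMap.continuous
    exact InclWeakEq.part4 X A b a₀ g hgb F Φ hc h0 h1 hA
end

section
/- For any f in the space of componentwise-embedding r-immersions of ⨿_k D^m in ℝ^n, the rescaled map f_{α(f)} with α(f) = min(1/2, sd(f)/(4·LR(f_{1/2}))) is small, i.e., satisfies LR(f_{α(f)}) < sd(f_{α(f)}) = sd(f). -/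
open Metric Set ENNReal

/-- `f` is an `r`-immersion of the union of `k` open unit discs in `ℝ^n`:
a smooth immersion such that no point of `ℝ^n` has `r` (or more) preimages. -/
def IsRImmersion (r : ℕ) {k m n : ℕ} (f : Fin k → Euc m → Euc n) : Prop :=
  (∀ i, ContDiffOn ℝ (⊤ : ℕ∞) (f i) (ball (0 : Euc m) 1)) ∧
  (∀ i, ∀ x ∈ ball (0 : Euc m) 1,
      Function.Injective (fderivWithin ℝ (f i) (ball (0 : Euc m) 1) x)) ∧
  ∀ z : Euc n, ¬ ∃ g : Fin r → Fin k × Euc m, Function.Injective g ∧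
      ∀ j, (g j).2 ∈ ball (0 : Euc m) 1 ∧ f (g j).1 (g j).2 = z

lemma lrad_resc_zero {k m n : ℕ} (f : Fin k → Euc m → Euc n) : lrad (resc 0 f) = 0 := by
  refine le_antisymm ?_ (zero_le)
  refine iSup_le fun i => iSup_le fun t => iSup_le fun ht => iSup_le fun x => iSup_le fun hx => ?_
  simp [resc]

lemma lrad_scale {k m n : ℕ} (f : Fin k → Euc m → Euc n) (s c : ℝ)
    (hc : 0 < c) (hc1 : c ≤ 1) :
    lrad (resc (c * s) f) ≤ ENNReal.ofReal c * lrad (resc s f) := by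
  refine iSup_le fun i => iSup_le fun t => iSup_le fun ht => iSup_le fun x => iSup_le fun hx => ?_
  obtain ⟨ht0, ht1⟩ := ht
  have hct : c * t ∈ Set.Ioc (0:ℝ) 1 := ⟨mul_pos hc ht0, mul_le_one₀ hc1 ht0.le ht1⟩
  set a : ℝ≥0∞ := (‖resc s f i ((c*t) • x) - resc s f i 0‖₊ : ℝ≥0∞) with ha
  have hterm : a / ENNReal.ofReal (c*t) ≤ lrad (resc s f) :=
    le_iSup_of_le i <| le_iSup_of_le (c*t) <| le_iSup_of_le hct <|
      le_iSup_of_le x <| le_iSup_of_le hx le_rfl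
  have hnum : (‖resc (c*s) f i (t • x) - resc (c*s) f i 0‖₊ : ℝ≥0∞) = a := by
    have h1 : (c*s) • (t • x) = s • ((c*t) • x) := by
      rw [smul_smul, smul_smul]; congr 1; ring
    simp [resc, ha, h1]
  rw [hnum, ENNReal.div_le_iff_le_mul
    (Or.inl ((ENNReal.ofReal_pos.mpr ht0).ne')) (Or.inl ENNReal.ofReal_ne_top)]
  have h2 : a ≤ lrad (resc s f) * ENNReal.ofReal (c * t) :=
    (ENNReal.div_le_iff_le_mul
      (Or.inl ((ENNReal.ofReal_pos.mpr hct.1).ne')) (Or.inl ENNReal.ofReal_ne_top)).mp hterm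
  calc a ≤ lrad (resc s f) * ENNReal.ofReal (c * t) := h2
    _ = ENNReal.ofReal c * lrad (resc s f) * ENNReal.ofReal t := by
        rw [ENNReal.ofReal_mul hc.le]; ring

lemma exists_lip_bound {k m n : ℕ} (f : Fin k → Euc m → Euc n)
    (hf : ∀ i, ContDiffOn ℝ (⊤ : ℕ∞) (f i) (ball (0 : Euc m) 1)) (i : Fin k) :
    ∃ C : ℝ, 0 ≤ C ∧ ∀ y ∈ closedBall (0 : Euc m) (1/2), ‖f i y - f i 0‖ ≤ C * ‖y‖ := by
  have hsub : closedBall (0 : Euc m) (1/2) ⊆ ball (0:Euc m) 1 :=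
    closedBall_subset_ball (by norm_num)
  have hdiffOn : DifferentiableOn ℝ (f i) (ball (0:Euc m) 1) :=
    (hf i).differentiableOn (by simp)
  have hdiff : ∀ x ∈ closedBall (0:Euc m) (1/2), DifferentiableAt ℝ (f i) x := fun x hx =>
    hdiffOn.differentiableAt (isOpen_ball.mem_nhds (hsub hx))
  have hcont : ContinuousOn (fun x => fderiv ℝ (f i) x) (ball (0:Euc m) 1) := by
    have h1 : ContinuousOn (fderivWithin ℝ (f i) (ball (0:Euc m) 1)) (ball (0:Euc m) 1) :=
      (hf i).continuousOn_fderivWithin isOpen_ball.uniqueDiffOn (by simp)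
    exact h1.congr fun x hx => (fderivWithin_of_isOpen isOpen_ball hx).symm
  obtain ⟨C, hC⟩ := (isCompact_closedBall (0:Euc m) (1/2)).exists_bound_of_continuousOn
    (hcont.mono hsub)
  refine ⟨max C 0, le_max_right _ _, fun y hy => ?_⟩
  have : ‖f i y - f i 0‖ ≤ max C 0 * ‖y - 0‖ :=
    (convex_closedBall (0:Euc m) (1/2)).norm_image_sub_le_of_norm_fderiv_le hdiff
      (fun x hx => (hC x hx).trans (le_max_left C 0))
      (mem_closedBall_self (by norm_num)) hy
  simpa using this

lemma lrad_resc_half_lt_top {k m n : ℕ} (f : Fin k → Euc m → Euc n)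
    (hf : ∀ i, ContDiffOn ℝ (⊤ : ℕ∞) (f i) (ball (0 : Euc m) 1)) :
    lrad (resc (1/2) f) < ⊤ := by
  choose C hC0 hC using exists_lip_bound f hf
  obtain ⟨D, hD⟩ := Finite.exists_le C
  refine lt_of_le_of_lt (b := ENNReal.ofReal D) ?_ ENNReal.ofReal_lt_top
  refine iSup_le fun i => iSup_le fun t => iSup_le fun ht => iSup_le fun x => iSup_le fun hx => ?_
  obtain ⟨ht0, ht1⟩ := ht
  have hD0 : 0 ≤ D := (hC0 i).trans (hD i)
  set y : Euc m := (1/2 : ℝ) • (t • x) with hy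
  have hxn : ‖x‖ < 1 := by simpa using hx
  have hyn : ‖y‖ = 2⁻¹ * (|t| * ‖x‖) := by simp [hy, norm_smul]
  have hyt : ‖y‖ ≤ t := by
    rw [hyn, abs_of_pos ht0]; nlinarith [norm_nonneg x]
  have hymem : y ∈ closedBall (0:Euc m) (1/2) := by
    simp only [mem_closedBall, dist_zero_right]
    rw [hyn, abs_of_pos ht0]; nlinarith [norm_nonneg x]
  have hbound : ‖f i y - f i 0‖ ≤ D * t := by
    calc ‖f i y - f i 0‖ ≤ C i * ‖y‖ := hC i y hymem
      _ ≤ D * t := mul_le_mul (hD i) hyt (norm_nonneg _) hD0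
  have hcz : resc (1/2) f i 0 = f i 0 := by simp [resc]
  have hcy : resc (1/2) f i (t • x) = f i y := by simp [resc, hy]
  rw [hcz, hcy]
  refine ENNReal.div_le_of_le_mul ?_
  rw [← ENNReal.ofReal_coe_nnreal, coe_nnnorm, ← ENNReal.ofReal_mul hD0]
  exact ENNReal.ofReal_le_ofReal hbound

lemma safeDist_pos_of (r : ℕ) {k n : ℕ} (hr : 2 ≤ r) (hk : r ≤ k) (x : Fin k → Euc n)
    (hx : ∀ s : Finset (Fin k), s.card = r → ∃ i ∈ s, ∃ j ∈ s, x i ≠ x j) :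
    0 < safeDist r x := by
  have hrpos : (0:ℝ) < (r:ℝ) := by
    have : 0 < r := lt_of_lt_of_le (by norm_num) hr
    exact_mod_cast this
  set S : Set ℝ := {v : ℝ | ∃ s : Finset (Fin k), s.card = r ∧
      v = Real.sqrt (∑ j ∈ s, ‖x j - (r : ℝ)⁻¹ • ∑ i ∈ s, x i‖ ^ 2)} with hS
  have hne : S.Nonempty := by
    obtain ⟨s, -, hs⟩ := Finset.exists_subset_card_eq
      (show r ≤ (Finset.univ : Finset (Fin k)).card by simpa using hk)
    exact ⟨_, s, hs, rfl⟩
  have hfin : S.Finite := by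
    apply (Set.finite_range (fun s : Finset (Fin k) =>
      Real.sqrt (∑ j ∈ s, ‖x j - (r : ℝ)⁻¹ • ∑ i ∈ s, x i‖ ^ 2))).subset
    rintro v ⟨s, -, rfl⟩
    exact ⟨s, rfl⟩
  have hmem : sInf S ∈ S := hne.csInf_mem hfin
  obtain ⟨s, hs, hv⟩ := hmem
  have hpos : 0 < sInf S := by
    rw [hv]
    apply Real.sqrt_pos.mpr
    rcases lt_or_eq_of_le (Finset.sum_nonneg fun j _ => by positivity :
        (0:ℝ) ≤ ∑ j ∈ s, ‖x j - (r : ℝ)⁻¹ • ∑ i ∈ s, x i‖ ^ 2) with h | h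
    · exact h
    · exfalso
      have hall : ∀ j ∈ s, x j = (r : ℝ)⁻¹ • ∑ i ∈ s, x i := by
        intro j hj
        have := (Finset.sum_eq_zero_iff_of_nonneg (fun j _ => by positivity)).mp h.symm j hj
        have hnz : ‖x j - (r : ℝ)⁻¹ • ∑ i ∈ s, x i‖ = 0 := by
          nlinarith [norm_nonneg (x j - (r : ℝ)⁻¹ • ∑ i ∈ s, x i)]
        rw [norm_eq_zero, sub_eq_zero] at hnz
        exact hnz
      obtain ⟨i, hi, j, hj, hij⟩ := hx s hs
      exact hij ((hall i hi).trans (hall j hj).symm)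
  exact mul_pos (inv_pos.mpr (Real.sqrt_pos.mpr hrpos)) hpos

/-- For any componentwise-embedding `r`-immersion `f` of a union of discs, the
rescaled map `f_{α(f)}` with `α(f) = min(1/2, sd(f)/(4·LR(f_{1/2})))` is small:
`LR(f_{α(f)}) < sd(f_{α(f)}) = sd(f)`. -/
theorem resc_alpha_small (r k m n : ℕ) (hr : 2 ≤ r) (hk : r ≤ k)
    (f : Fin k → Euc m → Euc n)
    (hf : IsRImmersion r f)
    (hinj : ∀ i, Set.InjOn (f i) (ball (0 : Euc m) 1)) :
    lrad (resc (min (1 / 2)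
        (safeDist r (fun i => f i 0) / (4 * (lrad (resc (1 / 2) f)).toReal))) f) <
      ENNReal.ofReal (safeDist r (fun i =>
        resc (min (1 / 2)
          (safeDist r (fun i => f i 0) / (4 * (lrad (resc (1 / 2) f)).toReal))) f i 0)) ∧
    safeDist r (fun i =>
        resc (min (1 / 2)
          (safeDist r (fun i => f i 0) / (4 * (lrad (resc (1 / 2) f)).toReal))) f i 0) =
      safeDist r (fun i => f i 0) := by
  set sd := safeDist r (fun i => f i 0) with hsd_def
  set L' := lrad (resc (1/2) f) with hL'def
  set α := min (1/2 : ℝ) (sd / (4 * L'.toReal)) with hα_def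
  have hcent : (fun i => resc α f i 0) = fun i => f i 0 := by
    funext i; simp [resc]
  have hsd_pos : 0 < sd := by
    refine safeDist_pos_of r hr hk _ ?_
    intro s hs
    by_contra hcon
    push_neg at hcon
    have hne : s.Nonempty := Finset.card_pos.mp (by omega)
    obtain ⟨i0, hi0⟩ := hne
    apply hf.2.2 (f i0 0)
    refine ⟨fun j => (((s.orderIsoOfFin hs) j : Fin k), 0), ?_, ?_⟩
    · intro a b hab
      have := congrArg Prod.fst hab
      exact (s.orderIsoOfFin hs).injective (Subtype.val_injective this)
    · intro j
      refine ⟨mem_ball_self one_pos, ?_⟩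
      exact hcon _ ((s.orderIsoOfFin hs) j).2 i0 hi0
  have hL'top : L' ≠ ⊤ := (lrad_resc_half_lt_top f hf.1).ne
  rw [hcent]
  refine ⟨?_, rfl⟩
  by_cases hL0 : L' = 0
  · have hα0 : α = 0 := by
      rw [hα_def, hL0]
      simp
    rw [hα0, lrad_resc_zero]
    exact ENNReal.ofReal_pos.mpr hsd_pos
  · set L := L'.toReal with hLdef
    have hLpos : 0 < L := ENNReal.toReal_pos hL0 hL'top
    have hαpos : 0 < α := lt_min (by norm_num) (by positivity)
    have hα_le : α ≤ sd / (4 * L) := min_le_right _ _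
    have h1 : lrad (resc α f) ≤ ENNReal.ofReal (2*α) * L' := by
      have := lrad_scale f (1/2) (2*α) (by positivity) (by nlinarith [min_le_left (1/2 : ℝ) (sd / (4 * L'.toReal))])
      rwa [show (2*α) * (1/2 : ℝ) = α by ring] at this
    calc lrad (resc α f) ≤ ENNReal.ofReal (2*α) * L' := h1
      _ = ENNReal.ofReal (2*α) * ENNReal.ofReal L := by rw [← ENNReal.ofReal_toReal hL'top]
      _ = ENNReal.ofReal (2*α*L) := by rw [← ENNReal.ofReal_mul (by positivity)]
      _ ≤ ENNReal.ofReal (sd/2) := by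
          apply ENNReal.ofReal_le_ofReal
          have h2 : 2*α*L ≤ 2*(sd/(4*L))*L :=
            mul_le_mul_of_nonneg_right (by nlinarith) hLpos.le
          have h3 : 2*(sd/(4*L))*L = sd/2 := by field_simp; ring
          linarith
      _ < ENNReal.ofReal sd := (ENNReal.ofReal_lt_ofReal_iff hsd_pos).mpr (by linarith)
end

section
/- The map H((f, t))(x) = f(0_i) + (f(tx) - f(0_i))/t for t > 0, and H((f, 0))(x) = f(0_i) + D_{0_i}f(x), defines for each fixed t and each small componentwise-embedding r-immersion f another small componentwise-embedding r-immersion; moreover H(f, 0) is componentwise affine, and if f is componentwise affine then so is H(f, t) for all t; in fact H(f,t) = f for componentwise affine f. -/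
open Metric Set ENNReal

/-- `f` is small: `LR(f) < sd(f)`. -/
def SmallRImm (r : ℕ) {k m n : ℕ} (f : Fin k → Euc m → Euc n) : Prop :=
  lrad f < ENNReal.ofReal (safeDist r (fun i => f i 0))

/-- `f` is componentwise affine. -/
def CompAffine {k m n : ℕ} (f : Fin k → Euc m → Euc n) : Prop :=
  ∃ (a : Fin k → Euc n) (A : Fin k → (Euc m →L[ℝ] Euc n)), ∀ i x, f i x = a i + A i x

/-- The straightening homotopy: `H(f,t)(x) = f(0ᵢ) + (f(tx) - f(0ᵢ))/t` for
`t > 0`, and `H(f,0)(x) = f(0ᵢ) + D₀ᵢf(x)`. -/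
noncomputable def Hmap {k m n : ℕ} (f : Fin k → Euc m → Euc n) (t : ℝ) :
    Fin k → Euc m → Euc n := fun i x =>
  if 0 < t then f i 0 + t⁻¹ • (f i (t • x) - f i 0)
  else f i 0 + fderivWithin ℝ (f i) (ball (0 : Euc m) 1) 0 x


lemma ofReal_norm_eq_coe_nnnorm {E : Type*} [SeminormedAddGroup E] (a : E) :
    ENNReal.ofReal ‖a‖ = ((‖a‖₊ : NNReal) : ℝ≥0∞) := ENNReal.ofReal_eq_coe_nnreal _

section Aux

open Filter

variable {k m n : ℕ}

lemma coer_div (v : Euc n) {t : ℝ} (ht : 0 < t) :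
    (‖v‖₊ : ℝ≥0∞) / ENNReal.ofReal t = ENNReal.ofReal (‖v‖ / t) := by
  rw [ENNReal.ofReal_div_of_pos ht, ofReal_norm_eq_coe_nnnorm]

lemma le_lrad (f : Fin k → Euc m → Euc n) (i : Fin k) {t : ℝ} {x : Euc m}
    (ht : t ∈ Set.Ioc (0:ℝ) 1) (hx : x ∈ ball (0 : Euc m) 1) :
    ENNReal.ofReal (‖f i (t • x) - f i 0‖ / t) ≤ lrad f := by
  rw [← coer_div _ ht.1]
  exact le_iSup_of_le i (le_iSup_of_le t (le_iSup_of_le ht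
    (le_iSup_of_le x (le_iSup_of_le hx le_rfl))))

lemma safeDist_le_of_close {r : ℕ} (hr : 0 < r) (x : Fin k → Euc n) (z : Euc n)
    (s : Finset (Fin k)) (hs : s.card = r) {L : ℝ}
    (hL : ∀ i ∈ s, ‖x i - z‖ ≤ L) : safeDist r x ≤ L := by
  classical
  have hrR : (0:ℝ) < r := Nat.cast_pos.mpr hr
  have hsne : s.Nonempty := Finset.card_pos.mp (by rw [hs]; exact hr)
  have hL0 : 0 ≤ L := le_trans (norm_nonneg _) (hL _ hsne.choose_spec)
  set mp : Euc n := (r : ℝ)⁻¹ • ∑ i ∈ s, x i with hm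
  have hsum0 : ∑ j ∈ s, (x j - mp) = 0 := by
    rw [Finset.sum_sub_distrib, Finset.sum_const, hs, sub_eq_zero, hm,
      ← Nat.cast_smul_eq_nsmul ℝ, smul_smul, mul_inv_cancel₀ (ne_of_gt hrR), one_smul]
  have hexp : ∀ j ∈ s, ‖x j - z‖^2 = ‖x j - mp‖^2 + 2 * (inner ℝ (x j - mp) (mp - z) : ℝ) + ‖mp - z‖^2 := by
    intro j _
    have := norm_add_sq_real (x j - mp) (mp - z)
    rwa [sub_add_sub_cancel] at this
  have hsum_le : ∑ j ∈ s, ‖x j - mp‖^2 ≤ ∑ j ∈ s, ‖x j - z‖^2 := by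
    have h2 : ∑ j ∈ s, (2 * (inner ℝ (x j - mp) (mp - z) : ℝ)) = 0 := by
      rw [← Finset.mul_sum, ← sum_inner, hsum0, inner_zero_left, mul_zero]
    calc ∑ j ∈ s, ‖x j - mp‖^2
        ≤ ∑ j ∈ s, ‖x j - mp‖^2 + (s.card : ℝ) * ‖mp - z‖^2 := le_add_of_nonneg_right (by positivity)
      _ = ∑ j ∈ s, ‖x j - z‖^2 := by
          rw [Finset.sum_congr rfl hexp, Finset.sum_add_distrib, Finset.sum_add_distrib,
            h2, add_zero, Finset.sum_const, nsmul_eq_mul]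
  have hsum2 : ∑ j ∈ s, ‖x j - z‖^2 ≤ (r : ℝ) * L^2 := by
    calc ∑ j ∈ s, ‖x j - z‖^2 ≤ ∑ _j ∈ s, L^2 :=
          Finset.sum_le_sum fun j hj => pow_le_pow_left₀ (norm_nonneg _) (hL j hj) 2
      _ = (r : ℝ) * L^2 := by rw [Finset.sum_const, hs, nsmul_eq_mul]
  have hbdd : BddBelow {v : ℝ | ∃ s : Finset (Fin k), s.card = r ∧
      v = Real.sqrt (∑ j ∈ s, ‖x j - (r : ℝ)⁻¹ • ∑ i ∈ s, x i‖ ^ 2)} := by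
    refine ⟨0, fun v hv => ?_⟩
    obtain ⟨s', _, rfl⟩ := hv
    exact Real.sqrt_nonneg _
  have hmem : Real.sqrt (∑ j ∈ s, ‖x j - mp‖^2) ∈ {v : ℝ | ∃ s : Finset (Fin k), s.card = r ∧
      v = Real.sqrt (∑ j ∈ s, ‖x j - (r : ℝ)⁻¹ • ∑ i ∈ s, x i‖ ^ 2)} := ⟨s, hs, by rw [hm]⟩
  have h1 : sInf {v : ℝ | ∃ s : Finset (Fin k), s.card = r ∧
      v = Real.sqrt (∑ j ∈ s, ‖x j - (r : ℝ)⁻¹ • ∑ i ∈ s, x i‖ ^ 2)} ≤ Real.sqrt ((r:ℝ) * L^2) :=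
    le_trans (csInf_le hbdd hmem) (Real.sqrt_le_sqrt (le_trans hsum_le hsum2))
  have hsq : Real.sqrt ((r:ℝ) * L^2) = Real.sqrt r * L := by
    rw [Real.sqrt_mul (le_of_lt hrR), Real.sqrt_sq hL0]
  unfold safeDist
  calc (Real.sqrt r)⁻¹ * sInf {v : ℝ | ∃ s : Finset (Fin k), s.card = r ∧
        v = Real.sqrt (∑ j ∈ s, ‖x j - (r : ℝ)⁻¹ • ∑ i ∈ s, x i‖ ^ 2)}
      ≤ (Real.sqrt r)⁻¹ * (Real.sqrt r * L) := by
        refine mul_le_mul_of_nonneg_left ?_ (inv_nonneg.mpr (Real.sqrt_nonneg _))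
        rw [← hsq]; exact h1
    _ = L := by
        rw [← mul_assoc, inv_mul_cancel₀ (ne_of_gt (Real.sqrt_pos.mpr hrR)), one_mul]

lemma centers_contra {r : ℕ} (hr : 0 < r) (f : Fin k → Euc m → Euc n)
    (hsmall : SmallRImm r f) (z : Euc n) (s : Finset (Fin k)) (hs : s.card = r)
    (h : ∀ i ∈ s, (‖f i 0 - z‖₊ : ℝ≥0∞) ≤ lrad f) : False := by
  have htop : lrad f ≠ ⊤ := ne_top_of_lt hsmall
  have hL : ∀ i ∈ s, ‖f i 0 - z‖ ≤ (lrad f).toReal := by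
    intro i hi
    have h1 := h i hi
    rw [← ofReal_norm_eq_coe_nnnorm, ← ENNReal.ofReal_toReal htop] at h1
    exact (ENNReal.ofReal_le_ofReal_iff ENNReal.toReal_nonneg).mp h1
  have hsd := safeDist_le_of_close hr (fun i => f i 0) z s hs hL
  have hcon : ENNReal.ofReal (safeDist r fun i => f i 0) ≤ lrad f := by
    calc ENNReal.ofReal (safeDist r fun i => f i 0)
        ≤ ENNReal.ofReal (lrad f).toReal := ENNReal.ofReal_le_ofReal hsd
      _ = lrad f := ENNReal.ofReal_toReal htop
  exact absurd hsmall (not_lt.mpr hcon)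

lemma fderiv_bound (f : Fin k → Euc m → Euc n) (i : Fin k)
    (hfd : ContDiffOn ℝ (⊤ : ℕ∞) (f i) (ball (0 : Euc m) 1)) {x : Euc m}
    (hx : x ∈ ball (0 : Euc m) 1) :
    (‖fderivWithin ℝ (f i) (ball (0 : Euc m) 1) 0 x‖₊ : ℝ≥0∞) ≤ lrad f := by
  by_cases htop : lrad f = ⊤
  · rw [htop]; exact le_top
  have h0 : (0 : Euc m) ∈ ball (0 : Euc m) 1 := mem_ball_self one_pos
  have hdiff : DifferentiableAt ℝ (f i) 0 :=
    ((hfd.differentiableOn (by simp)) 0 h0).differentiableAt (isOpen_ball.mem_nhds h0)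
  have hA : fderivWithin ℝ (f i) (ball (0 : Euc m) 1) 0 = fderiv ℝ (f i) 0 :=
    fderivWithin_of_isOpen isOpen_ball h0
  have hc : Filter.Tendsto (fun nn : ℕ => ‖(nn : ℝ) + 1‖) Filter.atTop Filter.atTop := by
    have h1 : Filter.Tendsto (fun nn : ℕ => (nn : ℝ) + 1) Filter.atTop Filter.atTop :=
      Filter.tendsto_atTop_add_const_right _ 1 tendsto_natCast_atTop_atTop
    exact h1.congr fun nn => (Real.norm_of_nonneg (by positivity)).symm
  have hlim := hdiff.hasFDerivAt.lim x hc
  have hb : ∀ nn : ℕ, ‖((nn:ℝ)+1) • (f i (0 + ((nn:ℝ)+1)⁻¹ • x) - f i 0)‖ ≤ (lrad f).toReal := by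
    intro nn
    have hpos : (0:ℝ) < (nn:ℝ) + 1 := by positivity
    have h1 : (1:ℝ) ≤ (nn:ℝ) + 1 := by
      have := Nat.cast_nonneg (α := ℝ) nn; linarith
    have ht : ((nn:ℝ)+1)⁻¹ ∈ Set.Ioc (0:ℝ) 1 := ⟨inv_pos.mpr hpos, inv_le_one_of_one_le₀ h1⟩
    have hle := le_lrad f i ht hx
    rw [← ENNReal.ofReal_toReal htop] at hle
    have h2 := (ENNReal.ofReal_le_ofReal_iff ENNReal.toReal_nonneg).mp hle
    rw [div_eq_mul_inv, inv_inv] at h2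
    simp only [zero_add]
    rw [norm_smul, Real.norm_of_nonneg hpos.le]
    linarith [h2]
  have hAx : ‖fderivWithin ℝ (f i) (ball (0:Euc m) 1) 0 x‖ ≤ (lrad f).toReal := by
    rw [hA]
    exact le_of_tendsto' hlim.norm hb
  calc (‖fderivWithin ℝ (f i) (ball (0:Euc m) 1) 0 x‖₊ : ℝ≥0∞)
      = ENNReal.ofReal ‖fderivWithin ℝ (f i) (ball (0:Euc m) 1) 0 x‖ :=
        (ofReal_norm_eq_coe_nnnorm _).symm
    _ ≤ ENNReal.ofReal (lrad f).toReal := ENNReal.ofReal_le_ofReal hAx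
    _ = lrad f := ENNReal.ofReal_toReal htop

lemma Hmap_pos {f : Fin k → Euc m → Euc n} {t : ℝ} (ht : 0 < t) (i : Fin k) (x : Euc m) :
    Hmap f t i x = f i 0 + t⁻¹ • (f i (t • x) - f i 0) := if_pos ht

lemma Hmap_zero' (f : Fin k → Euc m → Euc n) (i : Fin k) (x : Euc m) :
    Hmap f 0 i x = f i 0 + fderivWithin ℝ (f i) (ball (0 : Euc m) 1) 0 x :=
  if_neg (lt_irrefl 0)

lemma Hmap_center (f : Fin k → Euc m → Euc n) (t : ℝ) (i : Fin k) :
    Hmap f t i 0 = f i 0 := by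
  unfold Hmap
  split
  · rw [smul_zero, sub_self, smul_zero, add_zero]
  · rw [map_zero, add_zero]

lemma smul_mem_ball' {t : ℝ} (ht : 0 < t) (ht1 : t ≤ 1) {x : Euc m}
    (hx : x ∈ ball (0 : Euc m) 1) : t • x ∈ ball (0 : Euc m) 1 := by
  rw [mem_ball_zero_iff] at *
  rw [norm_smul, Real.norm_of_nonneg ht.le]
  exact lt_of_le_of_lt (mul_le_of_le_one_left (norm_nonneg x) ht1) hx

lemma Hmap_contDiffOn_pos {f : Fin k → Euc m → Euc n} {i : Fin k}
    (hfC : ContDiffOn ℝ (⊤ : ℕ∞) (f i) (ball (0 : Euc m) 1)) {t : ℝ} (ht : 0 < t) (ht1 : t ≤ 1) :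
    ContDiffOn ℝ (⊤ : ℕ∞) (Hmap f t i) (ball (0 : Euc m) 1) := by
  have hmap : Set.MapsTo (fun y : Euc m => t • y) (ball (0:Euc m) 1) (ball (0:Euc m) 1) :=
    fun y hy => smul_mem_ball' ht ht1 hy
  have h1 : ContDiffOn ℝ (⊤ : ℕ∞) (fun y => f i (t • y)) (ball (0 : Euc m) 1) :=
    hfC.comp ((contDiff_id.const_smul t).contDiffOn) hmap
  have h2 : ContDiffOn ℝ (⊤ : ℕ∞) (fun y => f i 0 + t⁻¹ • (f i (t • y) - f i 0)) (ball (0:Euc m) 1) :=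
    contDiffOn_const.add ((h1.sub contDiffOn_const).const_smul t⁻¹)
  exact h2.congr fun y _ => Hmap_pos ht i y

lemma Hmap_hasFDeriv_pos {f : Fin k → Euc m → Euc n} {i : Fin k}
    (hfC : ContDiffOn ℝ (⊤ : ℕ∞) (f i) (ball (0 : Euc m) 1)) {t : ℝ} (ht : 0 < t) (ht1 : t ≤ 1)
    {x : Euc m} (hx : x ∈ ball (0 : Euc m) 1) :
    HasFDerivWithinAt (Hmap f t i) (fderivWithin ℝ (f i) (ball (0:Euc m) 1) (t • x))
      (ball (0:Euc m) 1) x := by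
  have htx : t • x ∈ ball (0:Euc m) 1 := smul_mem_ball' ht ht1 hx
  set D := fderivWithin ℝ (f i) (ball (0:Euc m) 1) (t • x) with hD
  have hD1 : HasFDerivWithinAt (f i) D (ball (0:Euc m) 1) (t • x) :=
    ((hfC.differentiableOn (by simp)) _ htx).hasFDerivWithinAt
  have hsmul : HasFDerivAt (fun y : Euc m => t • y) (t • ContinuousLinearMap.id ℝ (Euc m)) x :=
    (hasFDerivAt_id x).const_smul t
  have hcomp : HasFDerivWithinAt (fun y => f i (t • y))
      (D.comp (t • ContinuousLinearMap.id ℝ (Euc m))) (ball (0:Euc m) 1) x :=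
    hD1.comp x hsmul.hasFDerivWithinAt (fun y hy => smul_mem_ball' ht ht1 hy)
  have hH : HasFDerivWithinAt (Hmap f t i)
      (t⁻¹ • (D.comp (t • ContinuousLinearMap.id ℝ (Euc m)))) (ball (0:Euc m) 1) x := by
    have h3 := ((hcomp.sub_const (f i 0)).const_smul t⁻¹).const_add (f i 0)
    exact h3.congr (fun y _ => Hmap_pos ht i y) (Hmap_pos ht i x)
  have hCLM : t⁻¹ • (D.comp (t • ContinuousLinearMap.id ℝ (Euc m))) = D := by
    ext u
    simp only [ContinuousLinearMap.smul_apply, ContinuousLinearMap.coe_comp',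
      Function.comp_apply, ContinuousLinearMap.id_apply, map_smul, smul_smul,
      inv_mul_cancel₀ ht.ne', one_smul]
  rw [← hCLM]; exact hH

lemma Hmap_hasFDeriv_zero (f : Fin k → Euc m → Euc n) (i : Fin k) (x : Euc m) :
    HasFDerivWithinAt (Hmap f 0 i) (fderivWithin ℝ (f i) (ball (0:Euc m) 1) 0)
      (ball (0:Euc m) 1) x := by
  have h1 := (((fderivWithin ℝ (f i) (ball (0:Euc m) 1) 0).hasFDerivAt
    (x := x)).hasFDerivWithinAt (s := ball (0:Euc m) 1)).const_add (f i 0)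
  exact h1.congr (fun y _ => Hmap_zero' f i y) (Hmap_zero' f i x)

lemma Hmap_injOn {f : Fin k → Euc m → Euc n}
    (hinj : ∀ i, Set.InjOn (f i) (ball (0:Euc m) 1))
    (hfi : ∀ i, ∀ x ∈ ball (0:Euc m) 1,
      Function.Injective (fderivWithin ℝ (f i) (ball (0:Euc m) 1) x))
    {t : ℝ} (ht : t ∈ Set.Icc (0:ℝ) 1) (i : Fin k) :
    Set.InjOn (Hmap f t i) (ball (0:Euc m) 1) := by
  rcases ht.1.eq_or_lt with h0 | h0
  · subst h0
    intro x hx y hy hxy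
    rw [Hmap_zero', Hmap_zero'] at hxy
    exact hfi i 0 (mem_ball_self one_pos) (add_left_cancel hxy)
  · intro x hx y hy hxy
    rw [Hmap_pos h0, Hmap_pos h0] at hxy
    have h1 := add_left_cancel hxy
    have h2 : f i (t • x) - f i 0 = f i (t • y) - f i 0 :=
      smul_right_injective (Euc n) (inv_ne_zero h0.ne') h1
    have h3 : f i (t • x) = f i (t • y) := sub_left_injective h2
    have h4 := hinj i (smul_mem_ball' h0 ht.2 hx) (smul_mem_ball' h0 ht.2 hy) h3
    exact smul_right_injective (Euc m) h0.ne' h4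

lemma Hmap_nonoverlap {r : ℕ} (hr : 0 < r) {f : Fin k → Euc m → Euc n}
    (hfC : ∀ i, ContDiffOn ℝ (⊤ : ℕ∞) (f i) (ball (0:Euc m) 1))
    (hsmall : SmallRImm r f) {t : ℝ} (ht : t ∈ Set.Icc (0:ℝ) 1)
    (hIH : ∀ i, Set.InjOn (Hmap f t i) (ball (0:Euc m) 1)) :
    ∀ z : Euc n, ¬ ∃ g : Fin r → Fin k × Euc m, Function.Injective g ∧
      ∀ j, (g j).2 ∈ ball (0 : Euc m) 1 ∧ Hmap f t (g j).1 (g j).2 = z := by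
  rintro z ⟨g, ginj, hg⟩
  classical
  have hfst : Function.Injective fun j => (g j).1 := by
    intro j₁ j₂ hj
    simp only at hj
    have e1 := (hg j₁).2
    have e2 := (hg j₂).2
    rw [hj] at e1
    have hx := hIH (g j₂).1 (hg j₁).1 (hg j₂).1 (e1.trans e2.symm)
    exact ginj (Prod.ext hj hx)
  set s := Finset.image (fun j => (g j).1) Finset.univ with hsdef
  have hs : s.card = r := by
    rw [hsdef, Finset.card_image_of_injective _ hfst, Finset.card_univ, Fintype.card_fin]
  apply centers_contra hr f hsmall z s hs
  intro i hi
  obtain ⟨j, _, hj⟩ := Finset.mem_image.mp hi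
  subst hj
  have hx := (hg j).1
  have hz := (hg j).2
  rcases ht.1.eq_or_lt with h0 | h0
  · subst h0
    rw [Hmap_zero'] at hz
    have heq : f (g j).1 0 - z =
        -(fderivWithin ℝ (f (g j).1) (ball (0:Euc m) 1) 0 (g j).2) := by
      rw [← hz]; abel
    rw [heq, nnnorm_neg]
    exact fderiv_bound f _ (hfC _) hx
  · rw [Hmap_pos h0] at hz
    have heq : f (g j).1 0 - z = -(t⁻¹ • (f (g j).1 (t • (g j).2) - f (g j).1 0)) := by
      rw [← hz]; abel
    have hnorm : ‖f (g j).1 0 - z‖ = ‖f (g j).1 (t • (g j).2) - f (g j).1 0‖ / t := by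
      rw [heq, norm_neg, norm_smul, Real.norm_of_nonneg (inv_nonneg.mpr h0.le),
        inv_mul_eq_div]
    rw [← ofReal_norm_eq_coe_nnnorm, hnorm]
    exact le_lrad f _ ⟨h0, ht.2⟩ hx

lemma Hmap_small {r : ℕ} {f : Fin k → Euc m → Euc n}
    (hfC : ∀ i, ContDiffOn ℝ (⊤ : ℕ∞) (f i) (ball (0:Euc m) 1))
    (hsmall : SmallRImm r f) {t : ℝ} (ht : t ∈ Set.Icc (0:ℝ) 1) :
    SmallRImm r (Hmap f t) := by
  have hcent : (fun i => Hmap f t i 0) = fun i => f i 0 := funext fun i => Hmap_center f t i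
  unfold SmallRImm
  rw [hcent]
  refine lt_of_le_of_lt ?_ hsmall
  refine iSup_le fun i => iSup_le fun u => iSup_le fun hu => iSup_le fun x => iSup_le fun hx => ?_
  rcases ht.1.eq_or_lt with h0 | h0
  · subst h0
    rw [Hmap_zero', Hmap_center]
    have heq : f i 0 + fderivWithin ℝ (f i) (ball (0:Euc m) 1) 0 (u • x) - f i 0
        = u • fderivWithin ℝ (f i) (ball (0:Euc m) 1) 0 x := by
      rw [map_smul]; abel
    have h2 : ‖u • fderivWithin ℝ (f i) (ball (0:Euc m) 1) 0 x‖ / u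
        = ‖fderivWithin ℝ (f i) (ball (0:Euc m) 1) 0 x‖ := by
      rw [norm_smul, Real.norm_of_nonneg hu.1.le, mul_div_cancel_left₀ _ hu.1.ne']
    rw [heq, coer_div _ hu.1, h2, ofReal_norm_eq_coe_nnnorm]
    exact fderiv_bound f i (hfC i) hx
  · rw [Hmap_pos h0, Hmap_center]
    have heq : f i 0 + t⁻¹ • (f i (t • (u • x)) - f i 0) - f i 0
        = t⁻¹ • (f i ((t * u) • x) - f i 0) := by
      rw [smul_smul]; abel
    have hn : ‖t⁻¹ • (f i ((t*u) • x) - f i 0)‖ / u = ‖f i ((t*u) • x) - f i 0‖ / (t*u) := by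
      rw [norm_smul, Real.norm_of_nonneg (inv_nonneg.mpr h0.le), inv_mul_eq_div, div_div]
    rw [heq, coer_div _ hu.1, hn]
    exact le_lrad f i ⟨mul_pos h0 hu.1, mul_le_one₀ ht.2 hu.1.le hu.2⟩ hx

end Aux

/-- For every fixed `t ∈ [0,1]` and every small componentwise-embedding
`r`-immersion `f`, the map `H(f,t)` is again a small componentwise-embedding
`r`-immersion; moreover `H(f,0)` is componentwise affine, and if `f` is
componentwise affine then `H(f,t) = f` (so in particular `H(f,t)` is
componentwise affine). -/
theorem Hmap_properties (r k m n : ℕ) (hr : 2 ≤ r) (hk : r ≤ k)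
    (f : Fin k → Euc m → Euc n)
    (hf : IsRImmersion r f)
    (hinj : ∀ i, Set.InjOn (f i) (ball (0 : Euc m) 1))
    (hsmall : SmallRImm r f) :
    (∀ t ∈ Set.Icc (0 : ℝ) 1,
      IsRImmersion r (Hmap f t) ∧
      (∀ i, Set.InjOn (Hmap f t i) (ball (0 : Euc m) 1)) ∧
      SmallRImm r (Hmap f t)) ∧
    CompAffine (Hmap f 0) ∧
    (CompAffine f → ∀ t ∈ Set.Icc (0 : ℝ) 1, Hmap f t = f) := by
  have hr0 : 0 < r := lt_of_lt_of_le two_pos hr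
  have hB : ∀ t ∈ Set.Icc (0:ℝ) 1, ∀ i, Set.InjOn (Hmap f t i) (ball (0:Euc m) 1) :=
    fun t ht i => Hmap_injOn hinj hf.2.1 ht i
  refine ⟨fun t ht => ⟨⟨?_, ?_, ?_⟩, hB t ht, Hmap_small hf.1 hsmall ht⟩, ?_, ?_⟩
  · -- smoothness
    intro i
    rcases ht.1.eq_or_lt with h0 | h0
    · subst h0
      exact (contDiffOn_const.add
        ((fderivWithin ℝ (f i) (ball (0:Euc m) 1) 0).contDiff.contDiffOn)).congr
        fun x _ => Hmap_zero' f i x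
    · exact Hmap_contDiffOn_pos (hf.1 i) h0 ht.2
  · -- derivative injective
    intro i x hx
    rcases ht.1.eq_or_lt with h0 | h0
    · subst h0
      rw [(Hmap_hasFDeriv_zero f i x).fderivWithin (isOpen_ball.uniqueDiffWithinAt hx)]
      exact hf.2.1 i 0 (mem_ball_self one_pos)
    · rw [(Hmap_hasFDeriv_pos (hf.1 i) h0 ht.2 hx).fderivWithin
        (isOpen_ball.uniqueDiffWithinAt hx)]
      exact hf.2.1 i (t • x) (smul_mem_ball' h0 ht.2 hx)
  · -- non-overlapping
    exact Hmap_nonoverlap hr0 hf.1 hsmall ht (hB t ht)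
  · -- H(f,0) is affine
    exact ⟨fun i => f i 0, fun i => fderivWithin ℝ (f i) (ball (0:Euc m) 1) 0,
      fun i x => Hmap_zero' f i x⟩
  · -- affine case
    rintro ⟨a, A, hA⟩ t ht
    funext i x
    rcases ht.1.eq_or_lt with h0 | h0
    · subst h0
      rw [Hmap_zero']
      have hDf : fderivWithin ℝ (f i) (ball (0:Euc m) 1) 0 = A i := by
        have hfun : f i = fun y => a i + A i y := funext (hA i)
        have hder : HasFDerivWithinAt (f i) (A i) (ball (0:Euc m) 1) 0 := by
          rw [hfun]
          exact ((A i).hasFDerivAt.const_add (a i)).hasFDerivWithinAt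
        exact hder.fderivWithin (isOpen_ball.uniqueDiffWithinAt (mem_ball_self one_pos))
      rw [hDf, hA i x, hA i 0, map_zero, add_zero]
    · rw [Hmap_pos h0, hA i x, hA i 0, hA i (t • x), map_zero, add_zero, map_smul]
      congr 1
      rw [add_sub_cancel_left, smul_smul, inv_mul_cancel₀ h0.ne', one_smul]
end
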